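/- arXiv:2407.13728 — 4 statements merged into one kernel-verified Lean document; each statement's English description precedes it below -/
import Mathlib

section
/- For α > 1 and Hermitian operators γ ∈ Herm(A), γ' ∈ Herm(B) with γ, γ' ≠ 0, and positive semidefinite operators σ ∈ PSD(A), σ' ∈ PSD(B) with supp(γ) ⊆ supp(σ) and supp(γ') ⊆ supp(σ'), the extended sandwiched Rényi divergence is additive under tensor products: D̃_α(γ ⊗ γ' ∥ σ ⊗ σ') = D̃_α(γ ∥ σ) + D̃_α(γ' ∥ σ'). -/
open scoped Kronecker
open Matrix Filter Topology
open scoped ComplexOrder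
attribute [local instance] Classical.propDecidable

namespace QHE

/-- Functional calculus for Hermitian matrices (junk value `0` on non-Hermitian input). -/
noncomputable def mfun {n : Type*} [Fintype n] [DecidableEq n] (f : ℝ → ℝ)
    (A : Matrix n n ℂ) : Matrix n n ℂ :=
  if hA : A.IsHermitian then
    (hA.eigenvectorUnitary : Matrix n n ℂ) *
      Matrix.diagonal (fun i => (f (hA.eigenvalues i) : ℂ)) *
      (star (hA.eigenvectorUnitary : Matrix n n ℂ))
  else 0

/-- Real power of a Hermitian matrix, taken on its support (`0 ^ r = 0`). -/
noncomputable def mpow {n : Type*} [Fintype n] [DecidableEq n] (A : Matrix n n ℂ) (r : ℝ) :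
    Matrix n n ℂ :=
  mfun (fun x => if x = 0 then 0 else Real.rpow x r) A

/-- Logarithm of a Hermitian matrix, taken on its support. -/
noncomputable def mlog {n : Type*} [Fintype n] [DecidableEq n] (A : Matrix n n ℂ) :
    Matrix n n ℂ :=
  mfun (fun x => if x = 0 then 0 else Real.log x) A

/-- `‖X‖_α ^ α = Tr[(Xᴴ X)^(α/2)]`, the α-th power of the Schatten α-norm. -/
noncomputable def schattenPow {n : Type*} [Fintype n] [DecidableEq n] (α : ℝ)
    (X : Matrix n n ℂ) : ℝ :=
  ((mpow (Xᴴ * X) (α / 2)).trace).re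

/-- Support inclusion `supp γ ⊆ supp σ`, phrased as kernel inclusion `ker σ ⊆ ker γ`. -/
noncomputable def suppLE {n : Type*} [Fintype n] (γ σ : Matrix n n ℂ) : Prop :=
  ∀ v : n → ℂ, σ.mulVec v = 0 → γ.mulVec v = 0

/-- Extended sandwiched Rényi quasi-divergence
`Q̃_α(γ∥σ) = ‖σ^((1-α)/(2α)) γ σ^((1-α)/(2α))‖_α^α`. -/
noncomputable def sandQ {n : Type*} [Fintype n] [DecidableEq n] (α : ℝ)
    (γ σ : Matrix n n ℂ) : ℝ :=
  schattenPow α (mpow σ ((1 - α) / (2 * α)) * γ * mpow σ ((1 - α) / (2 * α)))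

/-- Extended sandwiched Rényi divergence (real-valued formula, meaningful when
`supp γ ⊆ supp σ`). -/
noncomputable def sandDR {n : Type*} [Fintype n] [DecidableEq n] (α : ℝ)
    (γ σ : Matrix n n ℂ) : ℝ :=
  (1 / (α - 1)) * Real.log (sandQ α γ σ)

/-- Extended sandwiched Rényi divergence, `+∞` when the support condition fails. -/
noncomputable def sandD {n : Type*} [Fintype n] [DecidableEq n] (α : ℝ)
    (γ σ : Matrix n n ℂ) : EReal :=
  if suppLE γ σ then ((sandDR α γ σ : ℝ) : EReal) else ⊤

/-- Trace norm `‖X‖₁`. -/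
noncomputable def traceNorm {n : Type*} [Fintype n] [DecidableEq n] (X : Matrix n n ℂ) : ℝ :=
  schattenPow 1 X

/-- Absolute value `|X| = (Xᴴ X)^(1/2)`. -/
noncomputable def matAbs {n : Type*} [Fintype n] [DecidableEq n] (X : Matrix n n ℂ) :
    Matrix n n ℂ :=
  mpow (Xᴴ * X) (1 / 2 : ℝ)

/-- Umegaki relative entropy `Tr[ρ(ln ρ − ln σ)]` (real-valued formula). -/
noncomputable def umegakiR {n : Type*} [Fintype n] [DecidableEq n] (ρ σ : Matrix n n ℂ) : ℝ :=
  ((ρ * (mlog ρ - mlog σ)).trace).re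

/-- Umegaki relative entropy, `+∞` when the support condition fails. -/
noncomputable def umegaki {n : Type*} [Fintype n] [DecidableEq n] (ρ σ : Matrix n n ℂ) : EReal :=
  if suppLE ρ σ then ((umegakiR ρ σ : ℝ) : EReal) else ⊤

/-- Density operator: positive semidefinite with unit trace. -/
noncomputable def IsState {n : Type*} [Fintype n] (ρ : Matrix n n ℂ) : Prop :=
  ρ.PosSemidef ∧ ρ.trace = 1

/-- Unit-trace Hermitian operator. -/
def UnitTraceHerm {n : Type*} [Fintype n] (τ : Matrix n n ℂ) : Prop :=
  τ.IsHermitian ∧ τ.trace = 1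

/-- `−ln x`, valued `+∞` for `x ≤ 0`. -/
noncomputable def negLogE (x : ℝ) : EReal :=
  if x ≤ 0 then ⊤ else ((-Real.log x : ℝ) : EReal)

/-- Extended hypothesis-testing divergence
`D_H^ε(τ∥σ) = sup{−ln Tr[Λσ] : 0 ≤ Λ ≤ I, Tr[Λτ] ≥ 1−ε}`. -/
noncomputable def DH {n : Type*} [Fintype n] [DecidableEq n] (ε : ℝ)
    (τ σ : Matrix n n ℂ) : EReal :=
  ⨆ Λ ∈ {Λ : Matrix n n ℂ |
      Λ.PosSemidef ∧ (1 - Λ).PosSemidef ∧ 1 - ε ≤ ((Λ * τ).trace).re},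
    negLogE (((Λ * σ).trace).re)

/-- Optimal error probability of state exclusion for the ensemble `(p, ρ)`. -/
noncomputable def Perr {n ι : Type*} [Fintype n] [DecidableEq n] [Fintype ι]
    (p : ι → ℝ) (ρ : ι → Matrix n n ℂ) : ℝ :=
  sInf {e : ℝ | ∃ Λ : ι → Matrix n n ℂ, (∀ x, (Λ x).PosSemidef) ∧ (∑ x, Λ x = 1) ∧
    e = ∑ x, p x * (((Λ x) * (ρ x)).trace).re}

/-- Optimal success probability of state discrimination for the ensemble `(p, ρ)`. -/
noncomputable def Psucc {n ι : Type*} [Fintype n] [DecidableEq n] [Fintype ι]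
    (p : ι → ℝ) (ρ : ι → Matrix n n ℂ) : ℝ :=
  sSup {e : ℝ | ∃ Λ : ι → Matrix n n ℂ, (∀ x, (Λ x).PosSemidef) ∧ (∑ x, Λ x = 1) ∧
    e = ∑ x, p x * (((Λ x) * (ρ x)).trace).re}

/-- The probability simplex over a finite index type. -/
def probSimplex (ι : Type*) [Fintype ι] : Set (ι → ℝ) :=
  {s | (∀ x, 0 ≤ s x) ∧ ∑ x, s x = 1}

/-- CPTP maps, characterized by Kraus representations. -/
def IsCPTP {n m : Type*} [Fintype n] [DecidableEq n] [Fintype m] [DecidableEq m]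
    (Φ : Matrix n n ℂ → Matrix m m ℂ) : Prop :=
  ∃ (k : ℕ) (K : Fin k → Matrix m n ℂ), (∑ i, (K i)ᴴ * K i = 1) ∧
    ∀ A, Φ A = ∑ i, K i * A * (K i)ᴴ

/-- Completely positive maps, characterized by Kraus representations. -/
def IsCPMap {n m : Type*} [Fintype n] [DecidableEq n] [Fintype m] [DecidableEq m]
    (Φ : Matrix n n ℂ → Matrix m m ℂ) : Prop :=
  ∃ (k : ℕ) (K : Fin k → Matrix m n ℂ), ∀ A, Φ A = ∑ i, K i * A * (K i)ᴴ

/-- Extension `id_{C^d} ⊗ Φ` of a (linear) map `Φ` to a `d`-dimensional reference system. -/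
noncomputable def matExt {n m : Type*} (Φ : Matrix n n ℂ → Matrix m m ℂ) (d : ℕ)
    (X : Matrix (Fin d × n) (Fin d × n) ℂ) : Matrix (Fin d × m) (Fin d × m) ℂ :=
  Matrix.of fun p q => Φ (Matrix.of fun a b => X (p.1, a) (q.1, b)) p.2 q.2

/-- Partial trace over the first tensor factor. -/
noncomputable def ptraceFst {a b : Type*} [Fintype a] (X : Matrix (a × b) (a × b) ℂ) : Matrix b b ℂ :=
  Matrix.of fun i j => ∑ k : a, X (k, i) (k, j)

/-- `k`-fold tensor power `A^{⊗k}` of a matrix. -/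
noncomputable def tensPow {n : Type*} [Fintype n] (A : Matrix n n ℂ) (k : ℕ) :
    Matrix (Fin k → n) (Fin k → n) ℂ :=
  Matrix.of fun f g => ∏ i, A (f i) (g i)

/-- Max-divergence `D_max(ρ∥σ) = inf{ln λ : λ ≥ 0, ρ ≤ λσ}` (`+∞` if infeasible). -/
noncomputable def Dmax {n : Type*} [Fintype n] [DecidableEq n] (ρ σ : Matrix n n ℂ) : EReal :=
  ⨅ l ∈ {l : ℝ | 0 ≤ l ∧ (l • σ - ρ).PosSemidef}, ((Real.log l : ℝ) : EReal)

/-- Channel divergence induced by a family of state divergences `D`: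
supremum over reference dimensions and bipartite input states. -/
noncomputable def Dch
    (D : (k : Type) → [Fintype k] → [DecidableEq k] → Matrix k k ℂ → Matrix k k ℂ → EReal)
    {n m : Type} [Fintype n] [DecidableEq n] [Fintype m] [DecidableEq m]
    (N M : Matrix n n ℂ → Matrix m m ℂ) : EReal :=
  ⨆ (d : ℕ), ⨆ ρ ∈ {ρ : Matrix (Fin d × n) (Fin d × n) ℂ | IsState ρ},
    D (Fin d × m) (matExt N d ρ) (matExt M d ρ)


section Aux
variable {n : Type*} [Fintype n] [DecidableEq n]
lemma eigU_mul_star {A : Matrix n n ℂ} (hA : A.IsHermitian) :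
    (hA.eigenvectorUnitary : Matrix n n ℂ) * (hA.eigenvectorUnitary : Matrix n n ℂ)ᴴ = 1 := by
  have := hA.eigenvectorUnitary.property
  rw [Unitary.mem_iff] at this
  simpa [Matrix.star_eq_conjTranspose] using this.2
lemma star_mul_eigU {A : Matrix n n ℂ} (hA : A.IsHermitian) :
    (hA.eigenvectorUnitary : Matrix n n ℂ)ᴴ * (hA.eigenvectorUnitary : Matrix n n ℂ) = 1 := by
  have := hA.eigenvectorUnitary.property
  rw [Unitary.mem_iff] at this
  simpa [Matrix.star_eq_conjTranspose] using this.1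
lemma mfun_of_isHermitian (f : ℝ → ℝ) {A : Matrix n n ℂ} (hA : A.IsHermitian) :
    mfun f A = (hA.eigenvectorUnitary : Matrix n n ℂ) *
      Matrix.diagonal (fun i => (f (hA.eigenvalues i) : ℂ)) *
      (hA.eigenvectorUnitary : Matrix n n ℂ)ᴴ := by
  rw [mfun, dif_pos hA, Matrix.star_eq_conjTranspose]
lemma spectral {A : Matrix n n ℂ} (hA : A.IsHermitian) :
    A = (hA.eigenvectorUnitary : Matrix n n ℂ) *
      Matrix.diagonal (fun i => ((hA.eigenvalues i : ℝ) : ℂ)) *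
      (hA.eigenvectorUnitary : Matrix n n ℂ)ᴴ := by
  simpa [Function.comp_def, Matrix.star_eq_conjTranspose] using hA.spectral_theorem
-- NEW LEMMAS BELOW
/-- Well-definedness of the functional calculus. -/
lemma mfun_eq_of_unitary (f : ℝ → ℝ) {A U : Matrix n n ℂ} {d : n → ℝ} (hA : A.IsHermitian)
    (hU : U * Uᴴ = 1) (hU' : Uᴴ * U = 1)
    (h : A = U * Matrix.diagonal (fun i => ((d i : ℝ) : ℂ)) * Uᴴ) :
    mfun f A = U * Matrix.diagonal (fun i => ((f (d i) : ℝ) : ℂ)) * Uᴴ := by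
  set V : Matrix n n ℂ := (hA.eigenvectorUnitary : Matrix n n ℂ) with hVdef
  have hV1 : V * Vᴴ = 1 := eigU_mul_star hA
  have hV2 : Vᴴ * V = 1 := star_mul_eigU hA
  set e : n → ℝ := hA.eigenvalues with hedef
  set De := Matrix.diagonal (fun i => ((e i : ℝ) : ℂ)) with hDe
  set Dd := Matrix.diagonal (fun i => ((d i : ℝ) : ℂ)) with hDd
  have hspec : A = V * De * Vᴴ := spectral hA
  have comm : De * (Vᴴ * U) = (Vᴴ * U) * Dd := by
    have e1 : V * De * Vᴴ = U * Dd * Uᴴ := hspec.symm.trans h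
    calc De * (Vᴴ * U) = (Vᴴ * V) * De * (Vᴴ * U) := by rw [hV2, one_mul]
      _ = Vᴴ * (V * De * Vᴴ) * U := by simp only [Matrix.mul_assoc]
      _ = Vᴴ * (U * Dd * Uᴴ) * U := by rw [e1]
      _ = (Vᴴ * U) * Dd * (Uᴴ * U) := by simp only [Matrix.mul_assoc]
      _ = (Vᴴ * U) * Dd := by rw [hU', mul_one]
  have commf : Matrix.diagonal (fun i => ((f (e i) : ℝ) : ℂ)) * (Vᴴ * U)
      = (Vᴴ * U) * Matrix.diagonal (fun i => ((f (d i) : ℝ) : ℂ)) := by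
    ext i j
    have hij : ((e i : ℝ) : ℂ) * (Vᴴ * U) i j = (Vᴴ * U) i j * ((d j : ℝ) : ℂ) := by
      have := congrFun (congrFun comm i) j
      simpa [hDe, hDd, Matrix.diagonal_mul, Matrix.mul_diagonal] using this
    by_cases hw : (Vᴴ * U) i j = 0
    · simp [Matrix.diagonal_mul, Matrix.mul_diagonal, hw]
    · have hed : e i = d j := by
        have : ((e i : ℝ) : ℂ) = ((d j : ℝ) : ℂ) := by
          have h2 : ((e i : ℝ) : ℂ) * (Vᴴ * U) i j = ((d j : ℝ) : ℂ) * (Vᴴ * U) i j := by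
            rw [hij, mul_comm]
          exact mul_right_cancel₀ hw h2
        exact_mod_cast this
      simp [Matrix.diagonal_mul, Matrix.mul_diagonal, hed, mul_comm]
  rw [mfun_of_isHermitian f hA]
  calc V * Matrix.diagonal (fun i => ((f (e i) : ℝ) : ℂ)) * Vᴴ
      = V * Matrix.diagonal (fun i => ((f (e i) : ℝ) : ℂ)) * (Vᴴ * (U * Uᴴ)) := by
        rw [hU, mul_one]
    _ = V * ((Matrix.diagonal (fun i => ((f (e i) : ℝ) : ℂ)) * (Vᴴ * U)) * Uᴴ) := by
        simp only [Matrix.mul_assoc]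
    _ = V * (((Vᴴ * U) * Matrix.diagonal (fun i => ((f (d i) : ℝ) : ℂ))) * Uᴴ) := by
        rw [commf]
    _ = (V * Vᴴ) * (U * Matrix.diagonal (fun i => ((f (d i) : ℝ) : ℂ)) * Uᴴ) := by
        simp only [Matrix.mul_assoc]
    _ = U * Matrix.diagonal (fun i => ((f (d i) : ℝ) : ℂ)) * Uᴴ := by rw [hV1, one_mul]


lemma mfun_mul (f g : ℝ → ℝ) {A : Matrix n n ℂ} (hA : A.IsHermitian) :
    mfun f A * mfun g A = mfun (fun x => f x * g x) A := by
  rw [mfun_of_isHermitian f hA, mfun_of_isHermitian g hA,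
    mfun_of_isHermitian (fun x => f x * g x) hA]
  set V : Matrix n n ℂ := (hA.eigenvectorUnitary : Matrix n n ℂ)
  have hV2 : Vᴴ * V = 1 := star_mul_eigU hA
  calc V * Matrix.diagonal (fun i => (f (hA.eigenvalues i) : ℂ)) * Vᴴ *
        (V * Matrix.diagonal (fun i => (g (hA.eigenvalues i) : ℂ)) * Vᴴ)
      = V * (Matrix.diagonal (fun i => (f (hA.eigenvalues i) : ℂ)) * ((Vᴴ * V) *
          Matrix.diagonal (fun i => (g (hA.eigenvalues i) : ℂ)))) * Vᴴ := by
        simp only [Matrix.mul_assoc]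
    _ = V * (Matrix.diagonal (fun i => (f (hA.eigenvalues i) : ℂ)) *
          Matrix.diagonal (fun i => (g (hA.eigenvalues i) : ℂ))) * Vᴴ := by
        rw [hV2, one_mul]
    _ = V * Matrix.diagonal (fun i => ((f (hA.eigenvalues i) * g (hA.eigenvalues i) : ℝ) : ℂ)) * Vᴴ := by
        rw [Matrix.diagonal_mul_diagonal]
        norm_cast
lemma mfun_isHermitian (f : ℝ → ℝ) {A : Matrix n n ℂ} (hA : A.IsHermitian) :
    (mfun f A).IsHermitian := by
  rw [mfun_of_isHermitian f hA]
  have hD : (Matrix.diagonal (fun i => (f (hA.eigenvalues i) : ℂ)))ᴴ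
      = Matrix.diagonal (fun i => (f (hA.eigenvalues i) : ℂ)) := by
    rw [Matrix.diagonal_conjTranspose]
    have h : (star fun i => ((f (hA.eigenvalues i) : ℝ) : ℂ))
        = fun i => ((f (hA.eigenvalues i) : ℝ) : ℂ) := by
      funext i
      exact Complex.conj_ofReal _
    rw [h]
  unfold Matrix.IsHermitian
  simp only [Matrix.conjTranspose_mul, Matrix.conjTranspose_conjTranspose, hD,
    Matrix.mul_assoc]
lemma trace_mfun (f : ℝ → ℝ) {A : Matrix n n ℂ} (hA : A.IsHermitian) :
    (mfun f A).trace = ((∑ i, f (hA.eigenvalues i) : ℝ) : ℂ) := by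
  rw [mfun_of_isHermitian f hA, Matrix.trace_mul_cycle, star_mul_eigU hA, one_mul,
    Matrix.trace_diagonal]
  push_cast
  rfl
lemma mfun_congr {f g : ℝ → ℝ} {A : Matrix n n ℂ} (hA : A.IsHermitian)
    (h : ∀ i, f (hA.eigenvalues i) = g (hA.eigenvalues i)) : mfun f A = mfun g A := by
  have hfg : (fun i => (f (hA.eigenvalues i) : ℂ)) = fun i => (g (hA.eigenvalues i) : ℂ) := by
    funext i
    rw [h i]
  rw [mfun_of_isHermitian f hA, mfun_of_isHermitian g hA, hfg]
lemma kron_conjT {m : Type*} (A : Matrix m m ℂ) (B : Matrix n n ℂ) :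
    (A ⊗ₖ B)ᴴ = Aᴴ ⊗ₖ Bᴴ := by
  ext ⟨i, j⟩ ⟨k, l⟩
  simp [Matrix.conjTranspose_apply, Matrix.kroneckerMap_apply, star_mul']
lemma kron_isHermitian {m : Type*} [Fintype m] [DecidableEq m]
    {A : Matrix m m ℂ} {B : Matrix n n ℂ} (hA : A.IsHermitian) (hB : B.IsHermitian) :
    (A ⊗ₖ B).IsHermitian := by
  unfold Matrix.IsHermitian
  rw [kron_conjT, hA.eq, hB.eq]
lemma mfun_kron {m : Type*} [Fintype m] [DecidableEq m]
    {A : Matrix m m ℂ} {B : Matrix n n ℂ} (hA : A.PosSemidef) (hB : B.PosSemidef)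
    (f : ℝ → ℝ) (hf : ∀ x y : ℝ, 0 ≤ x → 0 ≤ y → f (x * y) = f x * f y) :
    mfun f (A ⊗ₖ B) = mfun f A ⊗ₖ mfun f B := by
  set U : Matrix m m ℂ := (hA.1.eigenvectorUnitary : Matrix m m ℂ)
  set V : Matrix n n ℂ := (hB.1.eigenvectorUnitary : Matrix n n ℂ)
  set a : m → ℝ := hA.1.eigenvalues
  set b : n → ℝ := hB.1.eigenvalues
  have hW1 : (U ⊗ₖ V) * (U ⊗ₖ V)ᴴ = 1 := by
    rw [kron_conjT, ← Matrix.mul_kronecker_mul, eigU_mul_star hA.1, eigU_mul_star hB.1,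
      Matrix.one_kronecker_one]
  have hW2 : (U ⊗ₖ V)ᴴ * (U ⊗ₖ V) = 1 := by
    rw [kron_conjT, ← Matrix.mul_kronecker_mul, star_mul_eigU hA.1, star_mul_eigU hB.1,
      Matrix.one_kronecker_one]
  have hdec : A ⊗ₖ B = (U ⊗ₖ V) *
      Matrix.diagonal (fun p : m × n => ((a p.1 * b p.2 : ℝ) : ℂ)) * (U ⊗ₖ V)ᴴ := by
    conv_lhs => rw [spectral hA.1, spectral hB.1]
    rw [kron_conjT, Matrix.mul_kronecker_mul, Matrix.mul_kronecker_mul,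
      Matrix.diagonal_kronecker_diagonal]
    congr 2
    funext p
    push_cast
    rfl
  rw [mfun_eq_of_unitary f (kron_isHermitian hA.1 hB.1) hW1 hW2 hdec,
    mfun_of_isHermitian f hA.1, mfun_of_isHermitian f hB.1]
  conv_rhs => rw [Matrix.mul_kronecker_mul, Matrix.mul_kronecker_mul,
    Matrix.diagonal_kronecker_diagonal, ← kron_conjT]
  have hD : (fun p : m × n => ((f (a p.1 * b p.2) : ℝ) : ℂ))
      = fun p : m × n => ((f (a p.1) : ℝ) : ℂ) * ((f (b p.2) : ℝ) : ℂ) := by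
    funext p
    rw [hf _ _ (hA.eigenvalues_nonneg p.1) (hB.eigenvalues_nonneg p.2)]
    push_cast
    rfl
  rw [hD]
end Aux
section Aux2
variable {n : Type*} [Fintype n] [DecidableEq n]

lemma rpow_fun_mul (r : ℝ) : ∀ x y : ℝ, 0 ≤ x → 0 ≤ y →
    (if x * y = 0 then (0:ℝ) else Real.rpow (x * y) r)
      = (if x = 0 then (0:ℝ) else Real.rpow x r) * (if y = 0 then (0:ℝ) else Real.rpow y r) := by
  intro x y hx hy
  rcases eq_or_lt_of_le hx with hx0 | hx0
  · simp [← hx0]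
  rcases eq_or_lt_of_le hy with hy0 | hy0
  · simp [← hy0]
  have hxy : x * y ≠ 0 := by positivity
  simp only [hxy, if_false, hx0.ne', hy0.ne']
  exact Real.mul_rpow hx hy

lemma mpow_kron {m : Type*} [Fintype m] [DecidableEq m] {A : Matrix m m ℂ} {B : Matrix n n ℂ}
    (hA : A.PosSemidef) (hB : B.PosSemidef) (r : ℝ) :
    mpow (A ⊗ₖ B) r = mpow A r ⊗ₖ mpow B r :=
  mfun_kron hA hB _ (rpow_fun_mul r)

lemma schattenPow_kron {m : Type*} [Fintype m] [DecidableEq m] (α : ℝ)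
    (X : Matrix m m ℂ) (Y : Matrix n n ℂ) :
    schattenPow α (X ⊗ₖ Y) = schattenPow α X * schattenPow α Y := by
  have h1 : (X ⊗ₖ Y)ᴴ * (X ⊗ₖ Y) = (Xᴴ * X) ⊗ₖ (Yᴴ * Y) := by
    rw [kron_conjT, ← Matrix.mul_kronecker_mul]
  have e1 := trace_mfun (fun x => if x = 0 then 0 else Real.rpow x (α / 2))
    (Matrix.isHermitian_conjTranspose_mul_self X)
  have e2 := trace_mfun (fun x => if x = 0 then 0 else Real.rpow x (α / 2))
    (Matrix.isHermitian_conjTranspose_mul_self Y)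
  rw [schattenPow, h1, mpow,
    mfun_kron (Matrix.posSemidef_conjTranspose_mul_self X)
      (Matrix.posSemidef_conjTranspose_mul_self Y) _ (rpow_fun_mul (α / 2)),
    Matrix.trace_kronecker, schattenPow, schattenPow, mpow, mpow, e1, e2,
    ← Complex.ofReal_mul, Complex.ofReal_re, Complex.ofReal_re, Complex.ofReal_re]

lemma schattenPow_pos (α : ℝ) {X : Matrix n n ℂ} (hX : X ≠ 0) : 0 < schattenPow α X := by
  have hH := Matrix.isHermitian_conjTranspose_mul_self X
  have hP := Matrix.posSemidef_conjTranspose_mul_self X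
  rw [schattenPow, mpow, trace_mfun _ hH, Complex.ofReal_re]
  have hM : Xᴴ * X ≠ 0 := fun h => hX (Matrix.conjTranspose_mul_self_eq_zero.mp h)
  have hex : ∃ i, hH.eigenvalues i ≠ 0 := by
    by_contra hall
    push_neg at hall
    apply hM
    rw [spectral hH]
    have hz : (fun i => ((hH.eigenvalues i : ℝ) : ℂ)) = fun _ => (0 : ℂ) := by
      funext i
      rw [hall i]
      norm_num
    rw [hz]
    simp
  obtain ⟨i, hi⟩ := hex
  apply Finset.sum_pos'
  · intro j _
    by_cases h : hH.eigenvalues j = 0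
    · simp [h]
    · simp only [h, if_false]
      exact Real.rpow_nonneg (hP.eigenvalues_nonneg j) _
  · refine ⟨i, Finset.mem_univ i, ?_⟩
    have hpos : 0 < hH.eigenvalues i := lt_of_le_of_ne (hP.eigenvalues_nonneg i) (Ne.symm hi)
    simp only [hi, if_false]
    exact Real.rpow_pos_of_pos hpos _

lemma sandwich_ne_zero {γ σ : Matrix n n ℂ} (hγ : γ.IsHermitian) (hγ0 : γ ≠ 0)
    (hσ : σ.PosSemidef) (hs : suppLE γ σ) (r : ℝ) :
    mpow σ r * γ * mpow σ r ≠ 0 := by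
  set p : ℝ → ℝ := fun x => if x = 0 then 0 else 1 with hp
  have heig : ∀ i, (if hσ.1.eigenvalues i = 0 then (0:ℝ) else Real.rpow (hσ.1.eigenvalues i) (-r))
      * (if hσ.1.eigenvalues i = 0 then (0:ℝ) else Real.rpow (hσ.1.eigenvalues i) r)
      = p (hσ.1.eigenvalues i) := by
    intro i
    by_cases h : hσ.1.eigenvalues i = 0
    · simp [h, hp]
    · have hx : 0 < hσ.1.eigenvalues i := lt_of_le_of_ne (hσ.eigenvalues_nonneg i) (Ne.symm h)
      simp only [h, if_false, hp]
      calc Real.rpow (hσ.1.eigenvalues i) (-r) * Real.rpow (hσ.1.eigenvalues i) r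
          = Real.rpow (hσ.1.eigenvalues i) (-r + r) := (Real.rpow_add hx _ _).symm
        _ = 1 := by
            rw [neg_add_cancel]
            exact Real.rpow_zero _
  have hPQ : mpow σ (-r) * mpow σ r = mfun p σ := by
    rw [mpow, mpow, mfun_mul _ _ hσ.1]
    exact mfun_congr hσ.1 heig
  have hQP : mpow σ r * mpow σ (-r) = mfun p σ := by
    rw [mpow, mpow, mfun_mul _ _ hσ.1]
    refine mfun_congr hσ.1 ?_
    intro i
    rw [mul_comm]
    exact heig i
  have hid : mfun (fun x => x) σ = σ := by
    rw [mfun_of_isHermitian _ hσ.1]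
    exact (spectral hσ.1).symm
  have hsigP : σ * mfun p σ = σ := by
    have hmm : mfun (fun x => x) σ * mfun p σ = mfun (fun x => x * p x) σ := mfun_mul _ _ hσ.1
    rw [hid] at hmm
    rw [hmm]
    refine (mfun_congr hσ.1 ?_).trans hid
    intro i
    by_cases h : hσ.1.eigenvalues i = 0 <;> simp [h, hp]
  have hsig1P : σ * (1 - mfun p σ) = 0 := by
    rw [Matrix.mul_sub, Matrix.mul_one, hsigP, sub_self]
  have hgamP : γ * mfun p σ = γ := by
    have hz : γ * (1 - mfun p σ) = 0 := by
      ext i j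
      have hv : (γ * (1 - mfun p σ)).mulVec (Pi.single j 1) = 0 := by
        rw [← Matrix.mulVec_mulVec]
        apply hs
        rw [Matrix.mulVec_mulVec, hsig1P, Matrix.zero_mulVec]
      have h2 := congrFun hv i
      rw [Matrix.mulVec_single] at h2
      simpa using h2
    rw [Matrix.mul_sub, Matrix.mul_one, sub_eq_zero] at hz
    exact hz.symm
  have hPgam : mfun p σ * γ = γ := by
    have h1 : (γ * mfun p σ)ᴴ = γᴴ := by rw [hgamP]
    rw [Matrix.conjTranspose_mul, (mfun_isHermitian p hσ.1).eq, hγ.eq] at h1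
    exact h1
  intro hX
  apply hγ0
  have hzero : mpow σ (-r) * (mpow σ r * γ * mpow σ r) * mpow σ (-r) = 0 := by
    rw [hX, Matrix.mul_zero, Matrix.zero_mul]
  have e : mpow σ (-r) * (mpow σ r * γ * mpow σ r) * mpow σ (-r)
      = (mpow σ (-r) * mpow σ r) * γ * (mpow σ r * mpow σ (-r)) := by
    simp only [Matrix.mul_assoc]
  rw [e, hPQ, hQP, hPgam, hgamP] at hzero
  exact hzero

lemma sandQ_pos (α : ℝ) {γ σ : Matrix n n ℂ} (hγ : γ.IsHermitian) (hγ0 : γ ≠ 0)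
    (hσ : σ.PosSemidef) (hs : suppLE γ σ) : 0 < sandQ α γ σ :=
  schattenPow_pos α (sandwich_ne_zero hγ hγ0 hσ hs _)

lemma sandQ_kron {m : Type*} [Fintype m] [DecidableEq m] (α : ℝ)
    {γ σ : Matrix m m ℂ} {γ' σ' : Matrix n n ℂ}
    (hσ : σ.PosSemidef) (hσ' : σ'.PosSemidef) :
    sandQ α (γ ⊗ₖ γ') (σ ⊗ₖ σ') = sandQ α γ σ * sandQ α γ' σ' := by
  rw [sandQ, mpow_kron hσ hσ', ← Matrix.mul_kronecker_mul, ← Matrix.mul_kronecker_mul,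
    schattenPow_kron]
  rfl

end Aux2

/-- additivity of the extended sandwiched Rényi divergence under
tensor products. -/
theorem extended_sandwiched_renyi_additivity
    {m n : Type} [Fintype m] [DecidableEq m] [Fintype n] [DecidableEq n]
    (α : ℝ) (hα : 1 < α)
    (γ : Matrix m m ℂ) (γ' : Matrix n n ℂ)
    (hγ : γ.IsHermitian) (hγ0 : γ ≠ 0) (hγ' : γ'.IsHermitian) (hγ'0 : γ' ≠ 0)
    (σ : Matrix m m ℂ) (σ' : Matrix n n ℂ) (hσ : σ.PosSemidef) (hσ' : σ'.PosSemidef)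
    (hs : suppLE γ σ) (hs' : suppLE γ' σ') :
    sandDR α (γ ⊗ₖ γ') (σ ⊗ₖ σ') = sandDR α γ σ + sandDR α γ' σ' := by
  have h1 : 0 < sandQ α γ σ := sandQ_pos α hγ hγ0 hσ hs
  have h2 : 0 < sandQ α γ' σ' := sandQ_pos α hγ' hγ'0 hσ' hs'
  rw [sandDR, sandDR, sandDR, sandQ_kron α hσ hσ', Real.log_mul h1.ne' h2.ne', mul_add]

end QHE
end

section
/- For α ∈ (1,∞), tuples γ_1,...,γ_r of nonzero Hermitian operators and σ_1,...,σ_r of positive semidefinite operators on a Hilbert space H_A, a probability distribution p ∈ P_r, and nonnegative reals q_1,...,q_r, defining the block-diagonal operators Γ := ⊕_x p_x γ_x and Σ := ⊕_x q_x σ_x on C^r ⊗ H_A, the extended sandwiched Rényi quasi-divergence satisfies the direct-sum property Q̃_α(Γ∥Σ) = Σ_x p_x^α q_x^(1−α) Q̃_α(γ_x∥σ_x), provided supp(p_x γ_x) ⊆ supp(q_x σ_x) for all x. -/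
open scoped Kronecker
open Matrix Filter Topology
open scoped ComplexOrder
attribute [local instance] Classical.propDecidable

namespace QHE

section aux
open Polynomial
variable {n : Type*} [Fintype n] [DecidableEq n]

private lemma conj_pow (V D : Matrix n n ℂ) (hV1 : V * Vᴴ = 1) (hV2 : Vᴴ * V = 1) (k : ℕ) :
    (V * D * Vᴴ) ^ k = V * D ^ k * Vᴴ := by
  induction k with
  | zero => simpa using hV1.symm
  | succ k ih =>
    rw [pow_succ, ih, pow_succ]
    have h : V * D ^ k * Vᴴ * (V * D * Vᴴ) = V * D ^ k * ((Vᴴ * V) * (D * Vᴴ)) := by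
      simp only [Matrix.mul_assoc]
    rw [h, hV2, one_mul, ← Matrix.mul_assoc, ← Matrix.mul_assoc]

private lemma conj_aeval (V D : Matrix n n ℂ) (hV1 : V * Vᴴ = 1) (hV2 : Vᴴ * V = 1)
    (P : Polynomial ℝ) :
    aeval (V * D * Vᴴ) P = V * aeval D P * Vᴴ := by
  induction P using Polynomial.induction_on' with
  | add p q hp hq => rw [map_add, hp, hq, map_add, mul_add, add_mul]
  | monomial k a =>
    rw [aeval_monomial, aeval_monomial, conj_pow V D hV1 hV2]
    simp only [Algebra.algebraMap_eq_smul_one, smul_mul_assoc, one_mul, Matrix.mul_smul,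
      Matrix.smul_mul]

private lemma aeval_diag (c : n → ℂ) (P : Polynomial ℝ) :
    aeval (Matrix.diagonal c) P = Matrix.diagonal (fun i => aeval (c i) P) := by
  have h := aeval_algHom_apply (Matrix.diagonalAlgHom (n := n) (α := ℂ) ℝ) c P
  simp only [Matrix.diagonalAlgHom_apply] at h
  rw [h]
  exact congrArg Matrix.diagonal (funext fun i =>
    (aeval_algHom_apply (Pi.evalAlgHom ℝ (fun _ => ℂ) i) c P).symm)

private lemma aeval_ofReal (x : ℝ) (P : Polynomial ℝ) :
    aeval ((x : ℂ)) P = ((P.eval x : ℝ) : ℂ) := by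
  rw [show ((x : ℂ)) = algebraMap ℝ ℂ x from rfl, aeval_algebraMap_apply]
  rw [Polynomial.coe_aeval_eq_eval]
  rfl

/-- Functional calculus is independent of the chosen unitary diagonalization. -/
lemma mfun_eq_of_decomp (f : ℝ → ℝ) (A V : Matrix n n ℂ) (d : n → ℝ)
    (hV1 : V * Vᴴ = 1) (hV2 : Vᴴ * V = 1)
    (hAd : A = V * Matrix.diagonal (fun i => (d i : ℂ)) * Vᴴ) :
    mfun f A = V * Matrix.diagonal (fun i => (f (d i) : ℂ)) * Vᴴ := by
  have hdiagH : ∀ e : n → ℝ, (Matrix.diagonal (fun i => ((e i : ℝ) : ℂ)))ᴴ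
      = Matrix.diagonal (fun i => ((e i : ℝ) : ℂ)) := by
    intro e
    rw [Matrix.diagonal_conjTranspose]
    exact congrArg Matrix.diagonal (funext fun i => by
      simp [Complex.star_def, Complex.conj_ofReal])
  have hA : A.IsHermitian := by
    rw [hAd]
    unfold Matrix.IsHermitian
    rw [Matrix.conjTranspose_mul, Matrix.conjTranspose_mul, Matrix.conjTranspose_conjTranspose,
      hdiagH, Matrix.mul_assoc]
  set U : Matrix n n ℂ := (hA.eigenvectorUnitary : Matrix n n ℂ) with hU
  have hU1 : U * Uᴴ = 1 := by
    have := Matrix.mem_unitaryGroup_iff.mp hA.eigenvectorUnitary.2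
    simpa [Matrix.star_eq_conjTranspose] using this
  have hU2 : Uᴴ * U = 1 := by
    have := Matrix.mem_unitaryGroup_iff'.mp hA.eigenvectorUnitary.2
    simpa [Matrix.star_eq_conjTranspose] using this
  have hAe : A = U * Matrix.diagonal (fun i => ((hA.eigenvalues i : ℝ) : ℂ)) * Uᴴ := by
    conv_lhs => rw [hA.spectral_theorem]
    rfl
  classical
  set s : Finset ℝ := Finset.image d Finset.univ ∪ Finset.image hA.eigenvalues Finset.univ
    with hs
  set P : Polynomial ℝ := Lagrange.interpolate s id f with hP
  have hinj : Set.InjOn (id : ℝ → ℝ) s := Function.injective_id.injOn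
  have hevalP : ∀ x ∈ s, P.eval x = f x := fun x hx => by
    exact Lagrange.eval_interpolate_at_node f hinj hx
  have key : ∀ (W : Matrix n n ℂ) (e : n → ℝ), W * Wᴴ = 1 → Wᴴ * W = 1 →
      (∀ i, e i ∈ s) → A = W * Matrix.diagonal (fun i => ((e i : ℝ) : ℂ)) * Wᴴ →
      W * Matrix.diagonal (fun i => ((f (e i) : ℝ) : ℂ)) * Wᴴ = aeval A P := by
    intro W e hW1 hW2 hes hAW
    rw [hAW, conj_aeval W _ hW1 hW2, aeval_diag]
    refine congrArg (fun M => W * M * Wᴴ) (congrArg Matrix.diagonal (funext fun i => ?_))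
    rw [aeval_ofReal, hevalP _ (hes i)]
  have h1 := key U hA.eigenvalues hU1 hU2
    (fun i => Finset.mem_union_right _ (Finset.mem_image_of_mem _ (Finset.mem_univ i))) hAe
  have h2 := key V d hV1 hV2
    (fun i => Finset.mem_union_left _ (Finset.mem_image_of_mem _ (Finset.mem_univ i))) hAd
  rw [mfun, dif_pos hA]
  exact h1.trans h2.symm

variable {ι : Type*} [Fintype ι] [DecidableEq ι]

/-- Block-diagonal matrix with blocks `A x`. -/
def bd (A : ι → Matrix n n ℂ) : Matrix (ι × n) (ι × n) ℂ :=
  Matrix.of fun p q => if p.1 = q.1 then A p.1 p.2 q.2 else 0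

lemma bd_apply (A : ι → Matrix n n ℂ) (a b : ι) (i j : n) :
    bd A (a, i) (b, j) = if a = b then A a i j else 0 := rfl

lemma bd_mul (A B : ι → Matrix n n ℂ) : bd A * bd B = bd fun x => A x * B x := by
  ext ⟨a, i⟩ ⟨b, j⟩
  simp only [Matrix.mul_apply, Fintype.sum_prod_type, bd_apply]
  rw [Finset.sum_eq_single a]
  · by_cases hab : a = b <;> simp [bd_apply, hab, Matrix.mul_apply]
  · intro y _ hy
    simp [bd_apply, Ne.symm hy]
  · simp

lemma bd_conjTranspose (A : ι → Matrix n n ℂ) : (bd A)ᴴ = bd fun x => (A x)ᴴ := by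
  ext ⟨a, i⟩ ⟨b, j⟩
  by_cases hab : a = b
  · subst hab; simp [Matrix.conjTranspose_apply, bd_apply]
  · simp [Matrix.conjTranspose_apply, bd_apply, hab, Ne.symm hab]

lemma bd_one : bd (fun _ : ι => (1 : Matrix n n ℂ)) = 1 := by
  ext ⟨a, i⟩ ⟨b, j⟩
  by_cases hab : a = b
  · subst hab; simp [bd_apply, Matrix.one_apply, Prod.ext_iff]
  · simp [bd_apply, Matrix.one_apply, Prod.ext_iff, hab]

lemma bd_diagonal (c : ι → n → ℝ) :
    bd (fun x => Matrix.diagonal (fun i => ((c x i : ℝ) : ℂ)))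
      = Matrix.diagonal (fun p : ι × n => ((c p.1 p.2 : ℝ) : ℂ)) := by
  ext ⟨a, i⟩ ⟨b, j⟩
  by_cases hab : a = b
  · subst hab
    by_cases hij : i = j
    · subst hij; simp [bd_apply, Matrix.diagonal]
    · simp [bd_apply, Matrix.diagonal, hij, Prod.ext_iff]
  · simp [bd_apply, Matrix.diagonal, hab, Prod.ext_iff]

lemma bd_trace (A : ι → Matrix n n ℂ) : (bd A).trace = ∑ x, (A x).trace := by
  simp [Matrix.trace, Matrix.diag, bd_apply, Fintype.sum_prod_type]

lemma bd_conj_diag (U : ι → Matrix n n ℂ) (c : ι → n → ℝ) :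
    bd U * Matrix.diagonal (fun p : ι × n => ((c p.1 p.2 : ℝ) : ℂ)) * (bd U)ᴴ
      = bd fun x => U x * Matrix.diagonal (fun i => ((c x i : ℝ) : ℂ)) * (U x)ᴴ := by
  rw [← bd_diagonal c, bd_conjTranspose, bd_mul, bd_mul]

lemma mfun_bd (f : ℝ → ℝ) (A : ι → Matrix n n ℂ) (hA : ∀ x, (A x).IsHermitian) :
    mfun f (bd A) = bd fun x => mfun f (A x) := by
  classical
  set U : ι → Matrix n n ℂ := fun x => ((hA x).eigenvectorUnitary : Matrix n n ℂ) with hU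
  have hU1 : ∀ x, U x * (U x)ᴴ = 1 := fun x => by
    simpa [Matrix.star_eq_conjTranspose] using
      Matrix.mem_unitaryGroup_iff.mp (hA x).eigenvectorUnitary.2
  have hU2 : ∀ x, (U x)ᴴ * U x = 1 := fun x => by
    simpa [Matrix.star_eq_conjTranspose] using
      Matrix.mem_unitaryGroup_iff'.mp (hA x).eigenvectorUnitary.2
  have hdecomp : ∀ x, A x = U x * Matrix.diagonal (fun i => (((hA x).eigenvalues i : ℝ) : ℂ))
      * (U x)ᴴ := fun x => by
    conv_lhs => rw [(hA x).spectral_theorem]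
    rfl
  have hbd1 : bd U * (bd U)ᴴ = 1 := by
    rw [bd_conjTranspose, bd_mul]
    rw [show (fun x => U x * (U x)ᴴ) = fun _ : ι => (1 : Matrix n n ℂ) from funext hU1]
    exact bd_one
  have hbd2 : (bd U)ᴴ * bd U = 1 := by
    rw [bd_conjTranspose, bd_mul]
    rw [show (fun x => (U x)ᴴ * U x) = fun _ : ι => (1 : Matrix n n ℂ) from funext hU2]
    exact bd_one
  have hbdd : bd A = bd U * Matrix.diagonal
      (fun p : ι × n => (((hA p.1).eigenvalues p.2 : ℝ) : ℂ)) * (bd U)ᴴ := by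
    rw [bd_conj_diag U (fun x i => (hA x).eigenvalues i)]
    exact congrArg bd (funext hdecomp)
  rw [mfun_eq_of_decomp f (bd A) (bd U) (fun p => (hA p.1).eigenvalues p.2) hbd1 hbd2 hbdd,
    bd_conj_diag U (fun x i => f ((hA x).eigenvalues i))]
  exact congrArg bd (funext fun x =>
    (mfun_eq_of_decomp f (A x) (U x) ((hA x).eigenvalues) (hU1 x) (hU2 x) (hdecomp x)).symm)

lemma mpow_bd (r : ℝ) (A : ι → Matrix n n ℂ) (hA : ∀ x, (A x).IsHermitian) :
    mpow (bd A) r = bd fun x => mpow (A x) r :=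
  mfun_bd _ A hA

lemma mpow_zero_mat (r : ℝ) : mpow (0 : Matrix n n ℂ) r = 0 := by
  have h : (0 : Matrix n n ℂ)
      = 1 * Matrix.diagonal (fun _ : n => ((0 : ℝ) : ℂ)) * (1 : Matrix n n ℂ)ᴴ := by
    rw [Matrix.conjTranspose_one, Complex.ofReal_zero, Matrix.diagonal_zero, Matrix.mul_one,
      Matrix.one_mul]
  rw [mpow, mfun_eq_of_decomp _ _ 1 (fun _ => 0)
    (by rw [Matrix.conjTranspose_one, Matrix.mul_one]) (by rw [Matrix.conjTranspose_one, Matrix.mul_one]) h]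
  simp

lemma smul_conj_diag (U : Matrix n n ℂ) (c : ℝ) (g : n → ℂ) :
    c • (U * Matrix.diagonal g * Uᴴ) = U * Matrix.diagonal (fun i => c • g i) * Uᴴ := by
  rw [show Matrix.diagonal (fun i => c • g i) = c • Matrix.diagonal g by
      rw [← Matrix.diagonal_smul]; rfl,
    mul_smul_comm, smul_mul_assoc]

lemma mpow_smul {A : Matrix n n ℂ} (hA : A.PosSemidef) {c : ℝ} (hc : 0 < c) (r : ℝ) :
    mpow (c • A) r = c ^ r • mpow A r := by
  have hAh : A.IsHermitian := hA.1
  set U : Matrix n n ℂ := (hAh.eigenvectorUnitary : Matrix n n ℂ) with hU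
  have hU1 : U * Uᴴ = 1 := by
    simpa [Matrix.star_eq_conjTranspose] using
      Matrix.mem_unitaryGroup_iff.mp hAh.eigenvectorUnitary.2
  have hU2 : Uᴴ * U = 1 := by
    simpa [Matrix.star_eq_conjTranspose] using
      Matrix.mem_unitaryGroup_iff'.mp hAh.eigenvectorUnitary.2
  have hdecomp : A = U * Matrix.diagonal (fun i => ((hAh.eigenvalues i : ℝ) : ℂ)) * Uᴴ := by
    conv_lhs => rw [hAh.spectral_theorem]
    rfl
  have hsm : c • A = U * Matrix.diagonal (fun i => (((c * hAh.eigenvalues i : ℝ)) : ℂ)) * Uᴴ := by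
    have h1 : Matrix.diagonal (fun i => ((c * hAh.eigenvalues i : ℝ) : ℂ))
        = c • Matrix.diagonal (fun i => ((hAh.eigenvalues i : ℝ) : ℂ)) := by
      rw [← Matrix.diagonal_smul]
      exact congrArg Matrix.diagonal (funext fun i => by
        simp [Complex.real_smul])
    rw [h1]
    conv_lhs => rw [hdecomp]
    rw [mul_smul_comm, smul_mul_assoc]
  have hent : ∀ i, ((if c * hAh.eigenvalues i = 0 then (0 : ℝ)
        else Real.rpow (c * hAh.eigenvalues i) r : ℝ) : ℂ)
      = c ^ r • ((if hAh.eigenvalues i = 0 then (0 : ℝ)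
        else Real.rpow (hAh.eigenvalues i) r : ℝ) : ℂ) := by
    intro i
    have he : 0 ≤ hAh.eigenvalues i := hA.eigenvalues_nonneg i
    by_cases h0 : hAh.eigenvalues i = 0
    · simp [h0, hc.ne']
    · rw [if_neg (mul_ne_zero hc.ne' h0), if_neg h0, Real.rpow_eq_pow, Real.rpow_eq_pow,
        Real.mul_rpow hc.le he, Complex.ofReal_mul, Complex.real_smul]
  rw [mpow, mfun_eq_of_decomp _ _ U _ hU1 hU2 hsm,
    mpow, mfun_eq_of_decomp _ _ U _ hU1 hU2 hdecomp, smul_conj_diag]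
  exact congrArg (fun M => U * M * Uᴴ) (congrArg Matrix.diagonal (funext hent))

lemma schattenPow_zero_mat (α : ℝ) : schattenPow α (0 : Matrix n n ℂ) = 0 := by
  rw [schattenPow]
  simp [mpow_zero_mat]

lemma schattenPow_bd (α : ℝ) (X : ι → Matrix n n ℂ) :
    schattenPow α (bd X) = ∑ x, schattenPow α (X x) := by
  rw [schattenPow, bd_conjTranspose, bd_mul,
    mpow_bd _ _ (fun x => (Matrix.posSemidef_conjTranspose_mul_self (X x)).1),
    bd_trace, Complex.re_sum]
  rfl

lemma schattenPow_smul (α : ℝ) {c : ℝ} (hc : 0 < c) (Y : Matrix n n ℂ) :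
    schattenPow α (c • Y) = c ^ α * schattenPow α Y := by
  have h1 : (c • Y)ᴴ * (c • Y) = (c * c) • (Yᴴ * Y) := by
    rw [Matrix.conjTranspose_smul]
    simp [Matrix.smul_mul, Matrix.mul_smul, smul_smul, star_trivial]
  rw [schattenPow, h1, mpow_smul (Matrix.posSemidef_conjTranspose_mul_self Y) (mul_pos hc hc),
    Matrix.trace_smul]
  have h2 : (c * c) ^ (α / 2) = c ^ α := by
    rw [Real.mul_rpow hc.le hc.le, ← Real.rpow_add hc]
    norm_num
  rw [h2, schattenPow]
  simp [Complex.real_smul]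

end aux

section main
variable {n ι : Type*} [Fintype n] [DecidableEq n] [Fintype ι] [DecidableEq ι]

lemma sum_kron_eq_bd (A : ι → Matrix n n ℂ) :
    ∑ x, Matrix.single x x (1 : ℂ) ⊗ₖ A x = bd A := by
  ext ⟨a, i⟩ ⟨b, j⟩
  rw [Matrix.sum_apply]
  simp only [Matrix.kroneckerMap_apply, Matrix.single, Matrix.of_apply, bd_apply,
    ite_mul, one_mul, zero_mul]
  rw [Finset.sum_eq_single a]
  · by_cases hab : a = b <;> simp [hab]
  · intro y _ hy
    simp [hy]
  · simp

end main

/-- direct-sum property of the extended sandwiched Rényi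
quasi-divergence for block-diagonal operators. -/
theorem extended_sandwiched_renyi_direct_sum
    {n ι : Type} [Fintype n] [DecidableEq n] [Fintype ι] [DecidableEq ι]
    (α : ℝ) (hα : 1 < α)
    (γ σ : ι → Matrix n n ℂ)
    (hγ : ∀ x, (γ x).IsHermitian) (hγ0 : ∀ x, γ x ≠ 0)
    (hσ : ∀ x, (σ x).PosSemidef)
    (p : ι → ℝ) (hp : p ∈ probSimplex ι)
    (q : ι → ℝ) (hq : ∀ x, 0 ≤ q x)
    (hsupp : ∀ x, suppLE (p x • γ x) (q x • σ x)) :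
    sandQ α (∑ x, Matrix.single x x (1 : ℂ) ⊗ₖ (p x • γ x))
        (∑ x, Matrix.single x x (1 : ℂ) ⊗ₖ (q x • σ x)) =
      ∑ x, (p x) ^ α * (q x) ^ (1 - α) * sandQ α (γ x) (σ x) := by
  have hα0 : (0 : ℝ) < α := lt_trans one_pos hα
  have hα1 : (1 : ℝ) - α ≠ 0 := by linarith
  set β : ℝ := (1 - α) / (2 * α) with hβ
  have hσH : ∀ x, (q x • σ x).IsHermitian := by
    intro x
    unfold Matrix.IsHermitian
    rw [Matrix.conjTranspose_smul, (hσ x).1]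
    simp
  rw [sum_kron_eq_bd, sum_kron_eq_bd, sandQ, mpow_bd _ _ hσH, bd_mul, bd_mul, schattenPow_bd]
  apply Finset.sum_congr rfl
  intro x _
  by_cases hqx : q x = 0
  · rw [hqx]
    simp only [zero_smul, mpow_zero_mat, Matrix.zero_mul, Matrix.mul_zero]
    rw [schattenPow_zero_mat, Real.zero_rpow hα1]
    ring
  have hqpos : 0 < q x := lt_of_le_of_ne (hq x) (Ne.symm hqx)
  by_cases hpx : p x = 0
  · rw [hpx]
    simp only [zero_smul, Matrix.mul_zero, Matrix.zero_mul]
    rw [schattenPow_zero_mat, Real.zero_rpow (ne_of_gt hα0)]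
    ring
  have hppos : 0 < p x := lt_of_le_of_ne (hp.1 x) (Ne.symm hpx)
  rw [mpow_smul (hσ x) hqpos β]
  set S : Matrix n n ℂ := mpow (σ x) β with hS
  have hblock : (q x ^ β • S) * (p x • γ x) * (q x ^ β • S)
      = (q x ^ β * p x * q x ^ β) • (S * γ x * S) := by
    simp only [smul_mul_assoc, mul_smul_comm, smul_smul]
    ring_nf
  rw [hblock]
  have hcpos : 0 < q x ^ β * p x * q x ^ β :=
    mul_pos (mul_pos (Real.rpow_pos_of_pos hqpos β) hppos) (Real.rpow_pos_of_pos hqpos β)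
  rw [schattenPow_smul α hcpos]
  have hscal : (q x ^ β * p x * q x ^ β) ^ α = p x ^ α * q x ^ (1 - α) := by
    rw [Real.mul_rpow (mul_nonneg (Real.rpow_nonneg (hq x) β) hppos.le)
        (Real.rpow_nonneg (hq x) β),
      Real.mul_rpow (Real.rpow_nonneg (hq x) β) hppos.le,
      ← Real.rpow_mul (hq x)]
    have hexp : β * α + β * α = 1 - α := by
      rw [hβ]
      field_simp
      ring
    rw [mul_comm (q x ^ (β * α)) (p x ^ α), mul_assoc, ← Real.rpow_add hqpos, hexp]
  rw [hscal, sandQ]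


end QHE
end

section
/- Let (p_1,...,p_r; ρ_1,...,ρ_r) be an ensemble of density operators on a finite-dimensional Hilbert space with p_x > 0 for all x and Σ_x p_x = 1. Then the optimal error probability of state exclusion equals the value of the dual semidefinite program: P_err = sup{ Tr[γ] : γ Hermitian, γ ≤ p_x ρ_x for all x ∈ [r] }. -/
open scoped Kronecker
open Matrix Filter Topology
open scoped ComplexOrder
attribute [local instance] Classical.propDecidable

namespace QHE

section SDPHelpers

attribute [local instance] Matrix.normedAddCommGroup Matrix.normedSpace

set_option linter.unusedSectionVars false

variable {n : Type} [Fintype n] [DecidableEq n]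

private lemma re_smul' (c : ℝ) (z : ℂ) : (c • z).re = c * z.re := by
  rw [Complex.real_smul]; simp

private lemma psd_smul' {c : ℝ} (hc : 0 ≤ c) {A : Matrix n n ℂ} (hA : A.PosSemidef) :
    (c • A).PosSemidef := by
  constructor
  · unfold Matrix.IsHermitian
    rw [conjTranspose_smul, star_trivial, hA.1]
  · exact (hA.smul hc).2

private lemma herm_smul' (c : ℝ) {A : Matrix n n ℂ} (hA : A.IsHermitian) :
    (c • A).IsHermitian := by
  unfold Matrix.IsHermitian
  rw [conjTranspose_smul, star_trivial, hA]

private lemma trace_psd_nonneg' {A : Matrix n n ℂ} (hA : A.PosSemidef) : 0 ≤ A.trace := by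
  rw [Matrix.trace]
  apply Finset.sum_nonneg
  intro i _
  have h := hA.dotProduct_mulVec_nonneg (Pi.single i 1)
  simpa [Matrix.mulVec_single, dotProduct, Pi.single_apply, apply_ite,
    Matrix.diag] using h

open scoped MatrixOrder in
private lemma trace_mul_psd_nonneg' {A B : Matrix n n ℂ} (hA : A.PosSemidef)
    (hB : B.PosSemidef) : 0 ≤ ((A * B).trace).re := by
  have key : (0:ℂ) ≤ (A * B).trace := by
    have hB0 : 0 ≤ B := Matrix.nonneg_iff_posSemidef.mpr hB
    have h1 : A * B = (A * CFC.sqrt B) * CFC.sqrt B := by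
      rw [mul_assoc, CFC.sqrt_mul_sqrt_self B hB0]
    rw [h1, Matrix.trace_mul_cycle]
    have h2 : CFC.sqrt B * A * CFC.sqrt B = (CFC.sqrt B) ᴴ * A * CFC.sqrt B := by
      rw [← Matrix.star_eq_conjTranspose, (IsSelfAdjoint.of_nonneg (CFC.sqrt_nonneg B)).star_eq]
    rw [h2]
    exact trace_psd_nonneg' (hA.conjTranspose_mul_mul_same _)
  exact (RCLike.nonneg_iff.mp key).1

private lemma posSemidef_of_re_quadratic' {M : Matrix n n ℂ} (hM : M.IsHermitian)
    (h : ∀ v : n → ℂ, 0 ≤ (star v ⬝ᵥ M.mulVec v).re) : M.PosSemidef := by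
  apply hM.posSemidef_iff_eigenvalues_nonneg.mpr
  intro i
  rw [hM.eigenvalues_eq]
  exact h _

private lemma psd_vecMulVec' (v : n → ℂ) : (Matrix.vecMulVec v (star v)).PosSemidef := by
  have h : Matrix.vecMulVec v (star v) = Matrix.replicateCol Unit v * (Matrix.replicateCol Unit v)ᴴ := by
    rw [Matrix.conjTranspose_replicateCol, Matrix.vecMulVec_eq Unit]
  rw [h]
  exact Matrix.posSemidef_self_mul_conjTranspose _

private lemma trace_vecMulVec_mul' (v : n → ℂ) (M : Matrix n n ℂ) :
    ((Matrix.vecMulVec v (star v)) * M).trace = star v ⬝ᵥ M.mulVec v := by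
  simp only [Matrix.trace, Matrix.diag, Matrix.mul_apply, Matrix.vecMulVec_apply,
    dotProduct, Matrix.mulVec, Pi.star_apply]
  rw [Finset.sum_comm]
  simp only [Finset.mul_sum, Finset.sum_mul]
  congr 1; ext j; congr 1; ext i; ring

private lemma quad_bound' (W : Matrix n n ℂ) (v : n → ℂ) :
    |(star v ⬝ᵥ W.mulVec v).re| ≤ ((Fintype.card n : ℝ) * ‖W‖) * ∑ i, Complex.normSq (v i) := by
  have h1 : |(star v ⬝ᵥ W.mulVec v).re| ≤ ‖star v ⬝ᵥ W.mulVec v‖ :=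
    Complex.abs_re_le_norm _
  refine h1.trans ?_
  have h2 : ‖star v ⬝ᵥ W.mulVec v‖ ≤
      ∑ j, ∑ i, ‖v j‖ * (‖W‖ * ‖v i‖) := by
    refine (norm_sum_le _ _).trans ?_
    refine Finset.sum_le_sum fun j _ => ?_
    rw [Pi.star_apply, norm_mul]
    simp only [Complex.star_def, Complex.norm_conj]
    have hin : ‖(W.mulVec v) j‖ ≤ ∑ i, ‖W‖ * ‖v i‖ := by
      refine (norm_sum_le _ _).trans (Finset.sum_le_sum fun i _ => ?_)
      rw [norm_mul]
      refine mul_le_mul_of_nonneg_right ?_ (norm_nonneg (v i))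
      exact Matrix.norm_entry_le_entrywise_sup_norm W
    calc ‖v j‖ * ‖(W.mulVec v) j‖
        ≤ ‖v j‖ * ∑ i, ‖W‖ * ‖v i‖ :=
          mul_le_mul_of_nonneg_left hin (norm_nonneg _)
      _ = ∑ i, ‖v j‖ * (‖W‖ * ‖v i‖) := Finset.mul_sum _ _ _
  refine h2.trans ?_
  have h4 : ∑ j, ∑ i, ‖v j‖ * (‖W‖ * ‖v i‖)
      = ‖W‖ * ((∑ i, ‖v i‖) * (∑ i, ‖v i‖)) := by
    rw [Finset.sum_mul_sum, Finset.mul_sum]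
    refine Finset.sum_congr rfl fun j _ => ?_
    rw [Finset.mul_sum]
    refine Finset.sum_congr rfl fun i _ => ?_
    ring
  have h5 : (∑ i, ‖v i‖) ^ 2 ≤ (Fintype.card n : ℝ) * ∑ i, Complex.normSq (v i) := by
    have := sq_sum_le_card_mul_sum_sq (s := Finset.univ) (f := fun i => ‖v i‖)
    simpa [Complex.sq_norm] using this
  rw [h4]
  have h6 := mul_le_mul_of_nonneg_left h5 (norm_nonneg W)
  calc ‖W‖ * ((∑ i, ‖v i‖) * (∑ i, ‖v i‖))
      = ‖W‖ * (∑ i, ‖v i‖) ^ 2 := by ring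
    _ ≤ ‖W‖ * ((Fintype.card n : ℝ) * ∑ i, Complex.normSq (v i)) := h6
    _ = ((Fintype.card n : ℝ) * ‖W‖) * ∑ i, Complex.normSq (v i) := by ring

private lemma shifted_psd' {B : Matrix n n ℂ} (hB : B.IsHermitian) :
    ((((1:ℝ) + (Fintype.card n : ℝ) * ‖B - 1‖) • (1 : Matrix n n ℂ)) - B).PosSemidef := by
  set δ : ℝ := (Fintype.card n : ℝ) * ‖B - 1‖ with hδ
  apply posSemidef_of_re_quadratic'
  · apply Matrix.IsHermitian.sub _ hB
    unfold Matrix.IsHermitian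
    rw [conjTranspose_smul, star_trivial, Matrix.conjTranspose_one]
  · intro v
    have hexp : star v ⬝ᵥ ((((1:ℝ) + δ) • (1 : Matrix n n ℂ)) - B).mulVec v
        = ((1:ℝ) + δ) • (star v ⬝ᵥ v) - star v ⬝ᵥ B.mulVec v := by
      rw [Matrix.sub_mulVec, dotProduct_sub, smul_mulVec, Matrix.one_mulVec,
        dotProduct_smul]
    rw [hexp]
    have hres : star v ⬝ᵥ B.mulVec v = star v ⬝ᵥ v + star v ⬝ᵥ (B - 1).mulVec v := by
      rw [Matrix.sub_mulVec, dotProduct_sub, Matrix.one_mulVec]; ring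
    rw [hres]
    have hvv : (star v ⬝ᵥ v) = ((∑ i, Complex.normSq (v i) : ℝ) : ℂ) := by
      simp [dotProduct, Complex.normSq_eq_conj_mul_self]
    set s : ℝ := ∑ i, Complex.normSq (v i) with hs
    have key := quad_bound' (B - 1) v
    rw [← hs] at key
    have hre : (((1:ℝ) + δ) • (star v ⬝ᵥ v) - (star v ⬝ᵥ v + star v ⬝ᵥ (B - 1).mulVec v)).re
        = δ * s - (star v ⬝ᵥ (B - 1).mulVec v).re := by
      rw [hvv, Complex.real_smul]
      simp
      ring
    rw [hre]
    have habs := (abs_le.mp key).2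
    rw [hδ]
    linarith

private lemma stdBasis_decomp' (i j : n) (z : ℂ) :
    Matrix.single i j z = z.re • Matrix.single i j 1
      + z.im • Matrix.single i j Complex.I := by
  ext a b
  simp only [Matrix.single, Matrix.of_apply, Matrix.add_apply, Matrix.smul_apply]
  split_ifs
  · apply Complex.ext <;> simp [Complex.real_smul]
  · simp

private lemma exists_rep' (g : Matrix n n ℂ →ₗ[ℝ] ℝ) :
    ∃ G : Matrix n n ℂ, G.IsHermitian ∧
      ∀ Λ : Matrix n n ℂ, Λ.IsHermitian → ((G * Λ).trace).re = g Λ := by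
  set G₀ : Matrix n n ℂ := Matrix.of fun j i =>
    ((g (Matrix.single i j 1) : ℝ) : ℂ)
      - Complex.I * ((g (Matrix.single i j Complex.I) : ℝ) : ℂ) with hG₀
  have hrep : ∀ M : Matrix n n ℂ, ((G₀ * M).trace).re = g M := by
    intro M
    have hM := Matrix.matrix_eq_sum_single M
    nth_rewrite 2 [hM]
    rw [map_sum]
    have htr : (G₀ * M).trace = ∑ j, ∑ i, G₀ j i * M i j := by
      simp [Matrix.trace, Matrix.diag, Matrix.mul_apply]
    rw [htr]
    simp only [Complex.re_sum]
    rw [Finset.sum_comm]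
    simp only [map_sum]
    refine Finset.sum_congr rfl fun i _ => ?_
    refine Finset.sum_congr rfl fun j _ => ?_
    rw [stdBasis_decomp' i j (M i j), map_add, _root_.map_smul, _root_.map_smul]
    have hent : G₀ j i * M i j = (((g (Matrix.single i j 1) : ℝ) : ℂ)
        - Complex.I * ((g (Matrix.single i j Complex.I) : ℝ) : ℂ)) * M i j := rfl
    rw [hent]
    simp [Complex.mul_re, Complex.sub_re, Complex.sub_im, smul_eq_mul]
    ring
  refine ⟨(2⁻¹ : ℝ) • (G₀ + G₀ᴴ), ?_, ?_⟩
  · unfold Matrix.IsHermitian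
    rw [conjTranspose_smul, star_trivial, conjTranspose_add, conjTranspose_conjTranspose,
      add_comm]
  · intro Λ hΛ
    have hconj : ((G₀ᴴ * Λ).trace).re = ((G₀ * Λ).trace).re := by
      have h1 : G₀ᴴ * Λ = (Λ * G₀)ᴴ := by rw [Matrix.conjTranspose_mul, hΛ.eq]
      rw [h1, Matrix.trace_conjTranspose, Complex.star_def, Complex.conj_re,
        Matrix.trace_mul_comm]
    rw [smul_mul_assoc, Matrix.trace_smul, Matrix.add_mul, Matrix.trace_add]
    have hre2 : ((2⁻¹:ℝ) • ((G₀ * Λ).trace + (G₀ᴴ * Λ).trace)).re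
        = 2⁻¹ * (((G₀ * Λ).trace).re + ((G₀ᴴ * Λ).trace).re) := by
      rw [Complex.real_smul]
      simp
    rw [hre2, hconj, hrep]
    ring

end SDPHelpers
section SDPMain

attribute [local instance] Matrix.normedAddCommGroup Matrix.normedSpace

set_option linter.unusedSectionVars false
set_option maxHeartbeats 1000000

variable {n ι : Type} [Fintype n] [DecidableEq n] [Fintype ι] [Nonempty ι]

private lemma strong_dual' (p : ι → ℝ) (ρ : ι → Matrix n n ℂ)
    (hp : ∀ x, 0 < p x) (hρpsd : ∀ x, (ρ x).PosSemidef)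
    (hbddb : BddBelow {e : ℝ | ∃ Λ : ι → Matrix n n ℂ, (∀ x, (Λ x).PosSemidef) ∧
      (∑ x, Λ x = 1) ∧ e = ∑ x, p x * (((Λ x) * (ρ x)).trace).re})
    (v : ℝ)
    (hv : v < sInf {e : ℝ | ∃ Λ : ι → Matrix n n ℂ, (∀ x, (Λ x).PosSemidef) ∧
      (∑ x, Λ x = 1) ∧ e = ∑ x, p x * (((Λ x) * (ρ x)).trace).re}) :
    ∃ γ : Matrix n n ℂ, γ.IsHermitian ∧
      (∀ x, (p x • ρ x - γ).PosSemidef) ∧ v < (γ.trace).re := by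
  classical
  set SP : Set ℝ := {e : ℝ | ∃ Λ : ι → Matrix n n ℂ, (∀ x, (Λ x).PosSemidef) ∧
      (∑ x, Λ x = 1) ∧ e = ∑ x, p x * (((Λ x) * (ρ x)).trace).re} with hSP
  set P : ℝ := sInf SP with hP
  set S : Matrix n n ℂ := ∑ x, p x • ρ x with hS
  set rι : ℝ := (Fintype.card ι : ℝ) with hrι
  have hrι0 : 0 < rι := by
    rw [hrι]
    exact_mod_cast Fintype.card_pos
  -- the primal cone
  set C : Set (ℝ × Matrix n n ℂ) := {tb | ∃ Λ : ι → Matrix n n ℂ,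
      (∀ x, (Λ x).PosSemidef) ∧ tb.2 = ∑ x, Λ x ∧
      (∑ x, p x * ((Λ x * ρ x).trace).re) ≤ tb.1} with hC
  -- the lower-bound function
  set gfun : Matrix n n ℂ → ℝ := fun B =>
    (1 + (Fintype.card n : ℝ) * ‖B - 1‖) * P -
      rι⁻¹ * (((((1 + (Fintype.card n : ℝ) * ‖B - 1‖) • (1 : Matrix n n ℂ)) - B) * S).trace).re
    with hgfun
  -- Claim A : C is contained in the epigraph of gfun
  have hsub : C ⊆ {q : ℝ × Matrix n n ℂ | gfun q.2 ≤ q.1} := by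
    rintro ⟨t, B⟩ ⟨Λ, hΛ, hB2, hval⟩
    simp only [Set.mem_setOf_eq] at hB2 hval ⊢
    have hBh : B.IsHermitian := by
      rw [hB2]
      have : (∑ x, Λ x)ᴴ = ∑ x, (Λ x)ᴴ := by
        rw [Matrix.conjTranspose_sum]
      unfold Matrix.IsHermitian
      rw [this]
      exact Finset.sum_congr rfl fun x _ => (hΛ x).1
    set δ : ℝ := (Fintype.card n : ℝ) * ‖B - 1‖ with hδ
    have hδ0 : 0 ≤ δ := mul_nonneg (Nat.cast_nonneg _) (norm_nonneg _)
    have h1δ : (0:ℝ) < 1 + δ := by linarith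
    set c : ℝ := (1 + δ)⁻¹ with hc
    have hc0 : 0 < c := inv_pos.mpr h1δ
    set M : Matrix n n ℂ := (((1:ℝ) + δ) • (1 : Matrix n n ℂ)) - B with hM
    have hMpsd : M.PosSemidef := shifted_psd' hBh
    set Λ' : ι → Matrix n n ℂ := fun x => c • Λ x + (c * rι⁻¹) • M with hΛ'
    have hΛ'psd : ∀ x, (Λ' x).PosSemidef := fun x =>
      ((psd_smul' hc0.le (hΛ x)).add (psd_smul' (by positivity) hMpsd))
    have hsum : ∑ x, Λ' x = 1 := by
      rw [hΛ']
      rw [Finset.sum_add_distrib, ← Finset.smul_sum, ← hB2, Finset.sum_const,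
        Finset.card_univ, ← Nat.cast_smul_eq_nsmul ℝ, smul_smul, ← hrι]
      have h1 : rι * (c * rι⁻¹) = c := by
        field_simp
      rw [h1, ← smul_add]
      have h2 : B + M = ((1:ℝ) + δ) • (1 : Matrix n n ℂ) := by
        rw [hM, add_sub_cancel]
      rw [h2, smul_smul, hc, inv_mul_cancel₀ h1δ.ne', one_smul]
    have hterm : ∀ x, p x * ((Λ' x * ρ x).trace).re
        = c * (p x * ((Λ x * ρ x).trace).re) + (c * rι⁻¹) * (p x * ((M * ρ x).trace).re) := by
      intro x
      rw [hΛ']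
      rw [Matrix.add_mul, smul_mul_assoc, smul_mul_assoc, Matrix.trace_add,
        Matrix.trace_smul, Matrix.trace_smul, Complex.add_re, re_smul', re_smul']
      ring
    have hMS : ∑ x, p x * ((M * ρ x).trace).re = ((M * S).trace).re := by
      have h1 : M * S = ∑ x, p x • (M * ρ x) := by
        rw [hS, Finset.mul_sum]
        exact Finset.sum_congr rfl fun x _ => (mul_smul_comm _ _ _)
      rw [h1, Matrix.trace_sum, Complex.re_sum]
      exact (Finset.sum_congr rfl fun x _ => by rw [Matrix.trace_smul, re_smul']).symm
    set val : ℝ := ∑ x, p x * ((Λ x * ρ x).trace).re with hvaldef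
    set LM : ℝ := ((M * S).trace).re with hLM
    have he' : ∑ x, p x * ((Λ' x * ρ x).trace).re = c * val + (c * rι⁻¹) * LM := by
      rw [Finset.sum_congr rfl fun x _ => hterm x, Finset.sum_add_distrib,
        ← Finset.mul_sum, ← Finset.mul_sum, ← hvaldef, hMS]
    have hPle : P ≤ c * val + (c * rι⁻¹) * LM := by
      rw [hP]
      refine csInf_le hbddb ?_
      exact ⟨Λ', hΛ'psd, hsum, he'.symm⟩
    have hmul : (1 + δ) * P ≤ val + rι⁻¹ * LM := by
      calc (1 + δ) * P ≤ (1 + δ) * (c * val + (c * rι⁻¹) * LM) :=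
            mul_le_mul_of_nonneg_left hPle h1δ.le
        _ = ((1 + δ) * c) * val + ((1 + δ) * c) * (rι⁻¹ * LM) := by ring
        _ = val + rι⁻¹ * LM := by
            rw [hc, mul_inv_cancel₀ h1δ.ne', one_mul, one_mul]
    have hgB : gfun B = (1 + δ) * P - rι⁻¹ * LM := rfl
    rw [hgB]
    linarith
  -- gfun is continuous and gfun 1 = P
  have hd : Continuous fun B : Matrix n n ℂ => 1 + (Fintype.card n : ℝ) * ‖B - 1‖ :=
    continuous_const.add (continuous_const.mul ((continuous_id.sub continuous_const).norm))
  have hL : Continuous fun Mm : Matrix n n ℂ => ((Mm * S).trace).re :=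
    Complex.continuous_re.comp (Continuous.matrix_trace (continuous_id.matrix_mul
      continuous_const))
  have hinner : Continuous fun B : Matrix n n ℂ =>
      (((1 + (Fintype.card n : ℝ) * ‖B - 1‖) • (1 : Matrix n n ℂ)) - B) :=
    (hd.smul continuous_const).sub continuous_id
  have hgcont : Continuous gfun := by
    rw [hgfun]
    exact ((hd.mul continuous_const).sub (continuous_const.mul (hL.comp hinner)))
  have hg1 : gfun (1 : Matrix n n ℂ) = P := by
    rw [hgfun]
    simp
  -- the separation point is not in the closure of C
  have hzc : ((v, (1 : Matrix n n ℂ)) : ℝ × Matrix n n ℂ) ∉ closure C := by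
    intro hmem
    have hcl : closure C ⊆ {q : ℝ × Matrix n n ℂ | gfun q.2 ≤ q.1} :=
      closure_minimal hsub (isClosed_le (hgcont.comp continuous_snd) continuous_fst)
    have := hcl hmem
    simp only [Set.mem_setOf_eq] at this
    rw [hg1] at this
    exact absurd this (not_le.mpr hv)
  -- C is convex
  have hCconv : Convex ℝ C := by
    rintro ⟨t₁, B₁⟩ ⟨Λ₁, hΛ₁, hB₁, hv₁⟩ ⟨t₂, B₂⟩ ⟨Λ₂, hΛ₂, hB₂, hv₂⟩ a b ha hb hab
    dsimp only at hB₁ hv₁ hB₂ hv₂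
    refine ⟨fun x => a • Λ₁ x + b • Λ₂ x, fun x =>
      (psd_smul' ha (hΛ₁ x)).add (psd_smul' hb (hΛ₂ x)), ?_, ?_⟩
    · show a • B₁ + b • B₂ = _
      rw [Finset.sum_add_distrib, ← Finset.smul_sum, ← Finset.smul_sum, hB₁, hB₂]
    · show (∑ x, p x * (((a • Λ₁ x + b • Λ₂ x) * ρ x).trace).re) ≤ a * t₁ + b * t₂
      have hterm : ∀ x, p x * (((a • Λ₁ x + b • Λ₂ x) * ρ x).trace).re
          = a * (p x * ((Λ₁ x * ρ x).trace).re) + b * (p x * ((Λ₂ x * ρ x).trace).re) := by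
        intro x
        rw [Matrix.add_mul, smul_mul_assoc, smul_mul_assoc, Matrix.trace_add,
          Matrix.trace_smul, Matrix.trace_smul, Complex.add_re, re_smul', re_smul']
        ring
      rw [Finset.sum_congr rfl fun x _ => hterm x, Finset.sum_add_distrib,
        ← Finset.mul_sum, ← Finset.mul_sum]
      have := add_le_add (mul_le_mul_of_nonneg_left hv₁ ha)
        (mul_le_mul_of_nonneg_left hv₂ hb)
      exact this
  -- separation
  haveI : LocallyConvexSpace ℝ (ℝ × Matrix n n ℂ) := NormedSpace.toLocallyConvexSpace
  obtain ⟨f, u, hfv, hfb⟩ := geometric_hahn_banach_point_closed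
    (hCconv.closure) isClosed_closure hzc
  -- basic membership facts
  have hzero_mem : ((0, 0) : ℝ × Matrix n n ℂ) ∈ C := by
    refine ⟨fun _ => 0, fun _ => Matrix.PosSemidef.zero, by simp, ?_⟩
    simp
  have hu0 : u < 0 := by
    have := hfb _ (subset_closure hzero_mem)
    have h00 : ((0, 0) : ℝ × Matrix n n ℂ) = 0 := rfl
    rwa [h00, map_zero] at this
  -- cone property
  have hcone : ∀ s : ℝ, 0 ≤ s → ∀ b ∈ C, s • b ∈ C := by
    rintro s hs ⟨t, B⟩ ⟨Λ, hΛ, hB2, hval⟩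
    dsimp only at hB2 hval
    refine ⟨fun x => s • Λ x, fun x => psd_smul' hs (hΛ x), ?_, ?_⟩
    · show s • B = _
      rw [← Finset.smul_sum, hB2]
    · show (∑ x, p x * (((s • Λ x) * ρ x).trace).re) ≤ s * t
      have hterm : ∀ x, p x * (((s • Λ x) * ρ x).trace).re
          = s * (p x * ((Λ x * ρ x).trace).re) := by
        intro x
        rw [smul_mul_assoc, Matrix.trace_smul, re_smul']
        ring
      rw [Finset.sum_congr rfl fun x _ => hterm x, ← Finset.mul_sum]
      exact mul_le_mul_of_nonneg_left hval hs
  -- nonnegativity of f on C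
  have hnn : ∀ b ∈ C, 0 ≤ f b := by
    intro b hb
    by_contra hneg
    push_neg at hneg
    have hs : 0 < u / f b := div_pos_of_neg_of_neg hu0 hneg
    have hmem := hcone _ hs.le b hb
    have := hfb _ (subset_closure hmem)
    rw [_root_.map_smul, smul_eq_mul, div_mul_cancel₀ _ (ne_of_lt hneg)] at this
    exact lt_irrefl u this
  -- decomposition of f
  set a : ℝ := f (1, 0) with haf
  set g : Matrix n n ℂ →ₗ[ℝ] ℝ := f.toLinearMap.comp (LinearMap.inr ℝ ℝ (Matrix n n ℂ))
    with hgdef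
  have hdecomp : ∀ (t : ℝ) (B : Matrix n n ℂ), f (t, B) = t * a + g B := by
    intro t B
    have h1 : ((t, B) : ℝ × Matrix n n ℂ) = t • ((1 : ℝ), (0 : Matrix n n ℂ)) + (0, B) := by
      rw [Prod.smul_mk, smul_zero, smul_eq_mul, mul_one, Prod.mk_add_mk, add_zero, zero_add]
    rw [h1, map_add, _root_.map_smul, smul_eq_mul]
    rfl
  have ha0 : 0 ≤ a := by
    have hmem : ((1, 0) : ℝ × Matrix n n ℂ) ∈ C := by
      refine ⟨fun _ => 0, fun _ => Matrix.PosSemidef.zero, by simp, by simp⟩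
    exact hnn _ hmem
  -- single-POVM-element membership
  have hsingle : ∀ (x₀ : ι) (Λ₀ : Matrix n n ℂ), Λ₀.PosSemidef →
      ((p x₀ * ((Λ₀ * ρ x₀).trace).re, Λ₀) : ℝ × Matrix n n ℂ) ∈ C := by
    intro x₀ Λ₀ hΛ₀
    refine ⟨fun x => if x = x₀ then Λ₀ else 0, fun x => ?_, ?_, ?_⟩
    · by_cases h : x = x₀ <;> simp [h, hΛ₀, Matrix.PosSemidef.zero]
    · show Λ₀ = _
      rw [Finset.sum_ite_eq' Finset.univ x₀ (fun _ => Λ₀)]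
      simp
    · show (∑ x, p x * (((if x = x₀ then Λ₀ else 0) * ρ x).trace).re) ≤ _
      rw [Finset.sum_eq_single x₀]
      · simp
      · intro x _ hx
        simp [hx]
      · intro h
        exact absurd (Finset.mem_univ x₀) h
  have key4 : ∀ (x₀ : ι) (Λ₀ : Matrix n n ℂ), Λ₀.PosSemidef →
      0 ≤ p x₀ * ((Λ₀ * ρ x₀).trace).re * a + g Λ₀ := by
    intro x₀ Λ₀ hΛ₀
    have := hnn _ (hsingle x₀ Λ₀ hΛ₀)
    rwa [hdecomp] at this
  -- representation of g on Hermitian matrices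
  obtain ⟨G, hGh, hGrep⟩ := exists_rep' g
  have key4' : ∀ (x₀ : ι) (w : n → ℂ),
      0 ≤ p x₀ * (star w ⬝ᵥ (ρ x₀).mulVec w).re * a + (star w ⬝ᵥ G.mulVec w).re := by
    intro x₀ w
    have h1 := key4 x₀ _ (psd_vecMulVec' w)
    rw [trace_vecMulVec_mul'] at h1
    have h2 : g (Matrix.vecMulVec w (star w)) = (star w ⬝ᵥ G.mulVec w).re := by
      rw [← hGrep _ (psd_vecMulVec' w).1, Matrix.trace_mul_comm, trace_vecMulVec_mul']
    rwa [h2] at h1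
  have hfz : v * a + g 1 < 0 := by
    have h1 := hfv.trans hu0
    rwa [hdecomp] at h1
  have hg1 : g 1 = (G.trace).re := by
    rw [← hGrep 1 Matrix.isHermitian_one, mul_one]
  have ha : 0 < a := by
    rcases lt_or_eq_of_le ha0 with h | h
    · exact h
    · exfalso
      have hGpsd : G.PosSemidef := by
        apply posSemidef_of_re_quadratic' hGh
        intro w
        have := key4' (Classical.arbitrary ι) w
        rw [← h] at this
        simpa using this
      have htr : 0 ≤ (G.trace).re := (RCLike.nonneg_iff.mp (trace_psd_nonneg' hGpsd)).1
      rw [← h, mul_zero, zero_add, hg1] at hfz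
      exact absurd hfz (not_lt.mpr htr)
  refine ⟨(-(a⁻¹)) • G, herm_smul' _ hGh, ?_, ?_⟩
  · intro x
    apply posSemidef_of_re_quadratic'
    · exact ((psd_smul' (hp x).le (hρpsd x)).1).sub (herm_smul' _ hGh)
    · intro w
      have hq : (star w ⬝ᵥ (p x • ρ x - (-(a⁻¹)) • G).mulVec w).re
          = p x * (star w ⬝ᵥ (ρ x).mulVec w).re + a⁻¹ * (star w ⬝ᵥ G.mulVec w).re := by
        rw [Matrix.sub_mulVec, dotProduct_sub, smul_mulVec, smul_mulVec,
          dotProduct_smul, dotProduct_smul, Complex.sub_re, re_smul', re_smul']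
        ring
      rw [hq]
      have h1 := key4' x w
      have h2 := mul_nonneg (inv_nonneg.mpr ha.le) h1
      have h3 : a⁻¹ * (p x * (star w ⬝ᵥ (ρ x).mulVec w).re * a + (star w ⬝ᵥ G.mulVec w).re)
          = p x * (star w ⬝ᵥ (ρ x).mulVec w).re + a⁻¹ * (star w ⬝ᵥ G.mulVec w).re := by
        field_simp
      rw [h3] at h2
      exact h2
  · have htr2 : (((-(a⁻¹)) • G).trace).re = -(a⁻¹) * (G.trace).re := by
      rw [Matrix.trace_smul, re_smul']
    rw [htr2]
    rw [hg1] at hfz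
    have h4 : v * a < -((G.trace).re) := by linarith
    calc v = (v * a) * a⁻¹ := by field_simp
      _ < (-((G.trace).re)) * a⁻¹ := mul_lt_mul_of_pos_right h4 (inv_pos.mpr ha)
      _ = -(a⁻¹) * (G.trace).re := by ring

private theorem state_exclusion_dual_SDP_aux
    {n ι : Type} [Fintype n] [DecidableEq n] [Fintype ι] [Nonempty ι]
    (p : ι → ℝ) (ρ : ι → Matrix n n ℂ)
    (hp : ∀ x, 0 < p x) (hρpsd : ∀ x, (ρ x).PosSemidef) :
    sInf {e : ℝ | ∃ Λ : ι → Matrix n n ℂ, (∀ x, (Λ x).PosSemidef) ∧ (∑ x, Λ x = 1) ∧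
      e = ∑ x, p x * (((Λ x) * (ρ x)).trace).re}
    = sSup {t : ℝ | ∃ γ : Matrix n n ℂ, γ.IsHermitian ∧
      (∀ x, (p x • ρ x - γ).PosSemidef) ∧ t = (γ.trace).re} := by
  classical
  set SP : Set ℝ := {e : ℝ | ∃ Λ : ι → Matrix n n ℂ, (∀ x, (Λ x).PosSemidef) ∧
      (∑ x, Λ x = 1) ∧ e = ∑ x, p x * (((Λ x) * (ρ x)).trace).re} with hSP
  set SD : Set ℝ := {t : ℝ | ∃ γ : Matrix n n ℂ, γ.IsHermitian ∧
      (∀ x, (p x • ρ x - γ).PosSemidef) ∧ t = (γ.trace).re} with hSD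
  have hSPne : SP.Nonempty := by
    refine ⟨∑ x, p x * ((((Fintype.card ι : ℝ)⁻¹ • (1 : Matrix n n ℂ)) * ρ x).trace).re,
      fun _ => (Fintype.card ι : ℝ)⁻¹ • (1 : Matrix n n ℂ), fun _ =>
      psd_smul' (by positivity) Matrix.PosSemidef.one, ?_, rfl⟩
    rw [Finset.sum_const, Finset.card_univ, ← Nat.cast_smul_eq_nsmul ℝ, smul_smul,
      mul_inv_cancel₀, one_smul]
    exact_mod_cast Fintype.card_pos.ne'
  obtain ⟨e₀, he₀⟩ := hSPne
  have hweak : ∀ e ∈ SP, ∀ t ∈ SD, t ≤ e := by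
    rintro e ⟨Λ, hΛ, hΛsum, he⟩ t ⟨γ, hγh, hγf, ht⟩
    have hterm : ∀ x, p x * ((Λ x * ρ x).trace).re
        = (((p x • ρ x - γ) * Λ x).trace).re + ((γ * Λ x).trace).re := by
      intro x
      have h1 : (p x • ρ x - γ) * Λ x + γ * Λ x = (p x • ρ x) * Λ x := by
        rw [Matrix.sub_mul, sub_add_cancel]
      have h2 : (((p x • ρ x) * Λ x).trace).re = p x * ((Λ x * ρ x).trace).re := by
        rw [smul_mul_assoc, Matrix.trace_smul, re_smul', Matrix.trace_mul_comm]
      rw [← h2, ← h1, Matrix.trace_add, Complex.add_re]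
    have hsum2 : ∑ x, ((γ * Λ x).trace).re = (γ.trace).re := by
      rw [← Complex.re_sum, ← Matrix.trace_sum, ← Finset.mul_sum, hΛsum, mul_one]
    have hnonneg : 0 ≤ ∑ x, (((p x • ρ x - γ) * Λ x).trace).re :=
      Finset.sum_nonneg fun x _ => trace_mul_psd_nonneg' (hγf x) (hΛ x)
    rw [he, Finset.sum_congr rfl fun x _ => hterm x, Finset.sum_add_distrib, hsum2, ht]
    linarith
  have hbddb : BddBelow SP := by
    refine ⟨0, ?_⟩
    rintro e ⟨Λ, hΛ, _, he⟩
    rw [he]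
    exact Finset.sum_nonneg fun x _ =>
      mul_nonneg (hp x).le (trace_mul_psd_nonneg' (hΛ x) (hρpsd x))
  have hSD0 : (0:ℝ) ∈ SD := by
    refine ⟨0, Matrix.isHermitian_zero, fun x => ?_, by simp⟩
    rw [sub_zero]
    exact psd_smul' (hp x).le (hρpsd x)
  have hbdda : BddAbove SD := ⟨e₀, fun t ht => hweak e₀ he₀ t ht⟩
  apply le_antisymm
  · apply le_of_forall_lt
    intro c hc
    obtain ⟨γ, hγh, hγf, hγt⟩ := strong_dual' p ρ hp hρpsd hbddb c hc
    exact lt_of_lt_of_le hγt (le_csSup hbdda ⟨γ, hγh, hγf, rfl⟩)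
  · exact csSup_le ⟨0, hSD0⟩ fun t ht => le_csInf ⟨e₀, he₀⟩ fun e he => hweak e he t ht

end SDPMain


/-- SDP duality for the one-shot error probability of state
exclusion. -/
theorem state_exclusion_dual_SDP
    {n ι : Type} [Fintype n] [DecidableEq n] [Fintype ι] [Nonempty ι]
    (p : ι → ℝ) (ρ : ι → Matrix n n ℂ)
    (hp : ∀ x, 0 < p x) (hp1 : ∑ x, p x = 1) (hρ : ∀ x, IsState (ρ x)) :
    Perr p ρ = sSup {t : ℝ | ∃ γ : Matrix n n ℂ, γ.IsHermitian ∧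
      (∀ x, (p x • ρ x - γ).PosSemidef) ∧ t = (γ.trace).re} := by
  unfold Perr
  exact state_exclusion_dual_SDP_aux p ρ hp (fun x => (hρ x).1)

end QHE
end

section
/- If a bivariate generalized divergence D is monotonically nonincreasing and regular in its second argument (i.e., D(ρ∥σ) = lim_{ε→0⁺} D(ρ∥σ+εI)), then the induced channel divergence D(N∥M) := sup_ρ D(N⊗id[ρ] ∥ M⊗id[ρ]) satisfies D(N∥M) = sup_{ε∈(0,1)} D(N∥M+εĪ) = lim_{ε→0⁺} D(N∥M+εĪ), where Ī is the unnormalized completely depolarizing map ρ ↦ Tr[ρ]·I. -/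
open scoped Kronecker
open Matrix Filter Topology
open scoped ComplexOrder
attribute [local instance] Classical.propDecidable

namespace QHE

noncomputable def ptrR {d n : Type*} [Fintype n] (X : Matrix (d × n) (d × n) ℂ) :
    Matrix d d ℂ := Matrix.of fun i j => ∑ a, X (i, a) (j, a)

/-- B ⊗ 1 -/

noncomputable def kId {d : Type*} (m : Type*) [DecidableEq m] (B : Matrix d d ℂ) :
    Matrix (d × m) (d × m) ℂ :=
  Matrix.of fun p q => B p.1 q.1 * (if p.2 = q.2 then 1 else 0)

lemma smul_posSemidef {k : Type*} [Fintype k] {ε : ℝ} (hε : 0 ≤ ε)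
    {A : Matrix k k ℂ} (hA : A.PosSemidef) : (ε • A).PosSemidef := by
  have h : (ε • A) = ((ε : ℂ) • A) := by
    ext i j; simp [Complex.real_smul]
  rw [h]
  refine Matrix.posSemidef_iff_dotProduct_mulVec.mpr ⟨?_, ?_⟩
  · have := hA.1
    unfold Matrix.IsHermitian at *
    rw [conjTranspose_smul, this]
    congr 1
    simp [Complex.ext_iff]
  · intro x
    rw [smul_mulVec, dotProduct_smul, smul_eq_mul]
    exact mul_nonneg (by exact_mod_cast hε) (hA.dotProduct_mulVec_nonneg x)

lemma ptrR_posSemidef {d n : Type*} [Fintype d] [Fintype n]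
    {X : Matrix (d × n) (d × n) ℂ} (hX : X.PosSemidef) : (ptrR X).PosSemidef := by
  refine Matrix.posSemidef_iff_dotProduct_mulVec.mpr ⟨?_, ?_⟩
  · ext i j
    simp only [ptrR, conjTranspose_apply, of_apply, star_sum]
    exact Finset.sum_congr rfl fun a _ => hX.1.apply _ _
  · intro w
    have key : star w ⬝ᵥ (ptrR X) *ᵥ w
        = ∑ a : n, star (fun p : d × n => if p.2 = a then w p.1 else 0) ⬝ᵥ
            X *ᵥ (fun p : d × n => if p.2 = a then w p.1 else 0) := by
      simp only [dotProduct, mulVec, ptrR, of_apply, dotProduct, Fintype.sum_prod_type,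
        Pi.star_apply, apply_ite star, star_zero, ite_mul, mul_ite, zero_mul, mul_zero]
      simp only [Finset.sum_ite_eq', Finset.mem_univ, if_true, Finset.mul_sum, Finset.sum_mul]
      have tri : ∀ F : d → d → n → ℂ,
          ∑ x : d, ∑ y : d, ∑ a : n, F x y a = ∑ a : n, ∑ x : d, ∑ y : d, F x y a := by
        intro F
        calc ∑ x : d, ∑ y : d, ∑ a : n, F x y a
            = ∑ x : d, ∑ a : n, ∑ y : d, F x y a :=
              Finset.sum_congr rfl fun _ _ => Finset.sum_comm
          _ = ∑ a : n, ∑ x : d, ∑ y : d, F x y a := Finset.sum_comm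
      rw [tri fun x y a => star (w x) * (X (x, a) (y, a) * w y)]
    rw [key]
    exact Finset.sum_nonneg fun a _ => hX.dotProduct_mulVec_nonneg _

lemma kId_posSemidef {d m : Type*} [Fintype d] [Fintype m] [DecidableEq m]
    {B : Matrix d d ℂ} (hB : B.PosSemidef) : (kId m B).PosSemidef := by
  refine Matrix.posSemidef_iff_dotProduct_mulVec.mpr ⟨?_, ?_⟩
  · ext p q
    simp only [kId, conjTranspose_apply, of_apply, star_mul', apply_ite star, star_one,
      star_zero]
    rw [hB.1.apply p.1 q.1]
    exact congrArg _ (if_congr eq_comm rfl rfl)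
  · intro v
    have key : star v ⬝ᵥ (kId m B) *ᵥ v
        = ∑ j : m, star (fun i : d => v (i, j)) ⬝ᵥ B *ᵥ (fun i : d => v (i, j)) := by
      simp only [dotProduct, mulVec, kId, of_apply, Fintype.sum_prod_type, Pi.star_apply,
        mul_ite, mul_zero, mul_one, ite_mul, zero_mul, Finset.sum_ite_eq', Finset.sum_ite_eq,
        Finset.mem_univ, if_true, Finset.mul_sum, Finset.sum_mul]
      rw [Finset.sum_comm]
    rw [key]
    exact Finset.sum_nonneg fun j _ => hB.dotProduct_mulVec_nonneg _

lemma ptrR_trace {d n : Type*} [Fintype d] [Fintype n]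
    (X : Matrix (d × n) (d × n) ℂ) : (ptrR X).trace = X.trace := by
  simp [Matrix.trace, ptrR, Matrix.diag, Fintype.sum_prod_type]

lemma one_sub_posSemidef {k : Type*} [Fintype k] [DecidableEq k]
    {A : Matrix k k ℂ} (hA : A.PosSemidef) (ht : A.trace = 1) :
    ((1 : Matrix k k ℂ) - A).PosSemidef := by
  have hH := hA.1
  have hsum : ∑ i, hH.eigenvalues i = 1 := by
    have h1 : A.trace = ∑ i, (hH.eigenvalues i : ℂ) := by
      conv_lhs => rw [hH.spectral_theorem, Unitary.conjStarAlgAut_apply]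
      rw [Matrix.trace_mul_cycle]
      rw [(Matrix.mem_unitaryGroup_iff').mp (hH.eigenvectorUnitary).2]
      simp [Matrix.trace_diagonal]
    rw [ht] at h1
    exact_mod_cast h1.symm
  have hle : ∀ i, hH.eigenvalues i ≤ 1 := by
    intro i
    rw [← hsum]
    exact Finset.single_le_sum (fun j _ => hA.eigenvalues_nonneg j) (Finset.mem_univ i)
  have hdecomp : (1 : Matrix k k ℂ) - A
      = (hH.eigenvectorUnitary : Matrix k k ℂ) *
        Matrix.diagonal (fun i => 1 - (hH.eigenvalues i : ℂ)) *
        (star (hH.eigenvectorUnitary : Matrix k k ℂ)) := by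
    have hd : Matrix.diagonal (fun i => 1 - (hH.eigenvalues i : ℂ))
        = 1 - Matrix.diagonal (RCLike.ofReal ∘ hH.eigenvalues) := by
      rw [← Matrix.diagonal_one, Matrix.diagonal_sub]
      rfl
    rw [hd, Matrix.mul_sub, Matrix.sub_mul, Matrix.mul_one,
      (Matrix.mem_unitaryGroup_iff).mp (hH.eigenvectorUnitary).2,
      ]
    conv_lhs => rw [hH.spectral_theorem, Unitary.conjStarAlgAut_apply]
  rw [hdecomp]
  refine Matrix.PosSemidef.mul_mul_conjTranspose_same ?_ _
  refine Matrix.posSemidef_diagonal_iff.mpr fun i => ?_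
  have : (0:ℝ) ≤ 1 - hH.eigenvalues i := by linarith [hle i]
  exact_mod_cast Complex.zero_le_real.mpr this

lemma kId_one_sub {d m : Type*} [Fintype d] [DecidableEq d] [Fintype m] [DecidableEq m]
    (B : Matrix d d ℂ) :
    (1 : Matrix (d × m) (d × m) ℂ) - kId m B = kId m ((1 : Matrix d d ℂ) - B) := by
  ext p q
  simp only [Matrix.sub_apply, Matrix.one_apply, kId, of_apply, Prod.mk.injEq,
    Prod.ext_iff]
  by_cases h2 : p.2 = q.2 <;> by_cases h1 : p.1 = q.1 <;> simp [h1, h2]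

lemma cptp_trace {n m : Type*} [Fintype n] [DecidableEq n] [Fintype m] [DecidableEq m]
    {Φ : Matrix n n ℂ → Matrix m m ℂ} (hΦ : IsCPTP Φ) (A : Matrix n n ℂ) :
    (Φ A).trace = A.trace := by
  obtain ⟨k, K, hK, hrep⟩ := hΦ
  rw [hrep, Matrix.trace_sum]
  have : ∀ i, (K i * A * (K i)ᴴ).trace = ((K i)ᴴ * K i * A).trace := fun i =>
    Matrix.trace_mul_cycle (K i) A (K i)ᴴ
  simp_rw [this, ← Matrix.trace_sum, ← Finset.sum_mul, hK, Matrix.one_mul]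

lemma matExt_rep {n m : Type*} [Fintype n] [DecidableEq n] [Fintype m] [DecidableEq m]
    (Φ : Matrix n n ℂ → Matrix m m ℂ) {k : ℕ} {K : Fin k → Matrix m n ℂ}
    (hrep : ∀ A, Φ A = ∑ i, K i * A * (K i)ᴴ) (d : ℕ)
    (X : Matrix (Fin d × n) (Fin d × n) ℂ) :
    matExt Φ d X = ∑ i, (Matrix.of fun (p : Fin d × m) (a : Fin d × n) =>
      if p.1 = a.1 then K i p.2 a.2 else 0) * X *
      (Matrix.of fun (p : Fin d × m) (a : Fin d × n) =>
      if p.1 = a.1 then K i p.2 a.2 else 0)ᴴ := by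
  ext p q
  simp only [matExt, of_apply, hrep, Matrix.sum_apply, Matrix.mul_apply,
    Matrix.conjTranspose_apply, of_apply, Fintype.sum_prod_type, apply_ite star, star_zero,
    ite_mul, zero_mul, mul_ite, mul_zero, Finset.sum_ite_irrel, Finset.sum_const_zero,
    Finset.sum_ite_eq, Finset.sum_ite_eq', Finset.mem_univ, if_true]

lemma matExt_posSemidef {n m : Type*} [Fintype n] [DecidableEq n] [Fintype m] [DecidableEq m]
    {Φ : Matrix n n ℂ → Matrix m m ℂ} (hΦ : IsCPMap Φ) (d : ℕ)
    {X : Matrix (Fin d × n) (Fin d × n) ℂ} (hX : X.PosSemidef) :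
    (matExt Φ d X).PosSemidef := by
  obtain ⟨k, K, hrep⟩ := hΦ
  rw [matExt_rep Φ hrep d X]
  refine Finset.sum_induction _ _ (fun _ _ ha hb => ha.add hb) Matrix.PosSemidef.zero
    fun i _ => hX.mul_mul_conjTranspose_same _

lemma matExt_trace {n m : Type*} [Fintype n] [DecidableEq n] [Fintype m] [DecidableEq m]
    {Φ : Matrix n n ℂ → Matrix m m ℂ} (hΦ : IsCPTP Φ) (d : ℕ)
    (X : Matrix (Fin d × n) (Fin d × n) ℂ) :
    (matExt Φ d X).trace = X.trace := by
  have : (matExt Φ d X).trace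
      = ∑ p1 : Fin d, (Φ (Matrix.of fun a b => X (p1, a) (p1, b))).trace := by
    simp [Matrix.trace, matExt, Matrix.diag, Fintype.sum_prod_type]
  rw [this]
  simp_rw [cptp_trace hΦ]
  simp [Matrix.trace, Matrix.diag, Fintype.sum_prod_type]

lemma matExt_isState {n m : Type*} [Fintype n] [DecidableEq n] [Fintype m] [DecidableEq m]
    {Φ : Matrix n n ℂ → Matrix m m ℂ} (hΦ : IsCPTP Φ) (d : ℕ)
    {X : Matrix (Fin d × n) (Fin d × n) ℂ} (hX : IsState X) :
    IsState (matExt Φ d X) := by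
  obtain ⟨k, K, hK, hrep⟩ := hΦ
  exact ⟨matExt_posSemidef ⟨k, K, hrep⟩ d hX.1, by rw [matExt_trace ⟨k, K, hK, hrep⟩ d X, hX.2]⟩

lemma matExt_eps {n m : Type*} [Fintype n] [DecidableEq n] [Fintype m] [DecidableEq m]
    (M : Matrix n n ℂ → Matrix m m ℂ) (ε : ℝ) (d : ℕ)
    (X : Matrix (Fin d × n) (Fin d × n) ℂ) :
    matExt (fun ρ => M ρ + ε • (ρ.trace • (1 : Matrix m m ℂ))) d X
      = matExt M d X + ε • kId m (ptrR X) := by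
  ext p q
  simp only [matExt, of_apply, Matrix.add_apply, Matrix.smul_apply, kId, ptrR, of_apply,
    Matrix.one_apply, Matrix.trace, Matrix.diag, smul_eq_mul]


/-- nonincreasing monotonicity and regularity in the second
argument are inherited by the induced channel divergence. -/
theorem channel_divergence_regularity
    {n m : Type} [Fintype n] [DecidableEq n] [Fintype m] [DecidableEq m]
    (D : (k : Type) → [Fintype k] → [DecidableEq k] → Matrix k k ℂ → Matrix k k ℂ → EReal)
    (hmono : ∀ (k : Type) [Fintype k] [DecidableEq k] (ρ σ σ' : Matrix k k ℂ),
      IsState ρ → σ.PosSemidef → σ'.PosSemidef → D k ρ (σ + σ') ≤ D k ρ σ)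
    (hreg : ∀ (k : Type) [Fintype k] [DecidableEq k] (ρ σ : Matrix k k ℂ),
      IsState ρ → σ.PosSemidef →
      Filter.Tendsto (fun ε : ℝ => D k ρ (σ + ε • (1 : Matrix k k ℂ)))
        (𝓝[>] (0 : ℝ)) (𝓝 (D k ρ σ)))
    (N M : Matrix n n ℂ → Matrix m m ℂ) (hN : IsCPTP N) (hM : IsCPMap M) :
    (Dch D N M =
        ⨆ ε ∈ Set.Ioo (0 : ℝ) 1,
          Dch D N (fun ρ => M ρ + ε • (ρ.trace • (1 : Matrix m m ℂ)))) ∧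
      Filter.Tendsto
        (fun ε : ℝ => Dch D N (fun ρ => M ρ + ε • (ρ.trace • (1 : Matrix m m ℂ))))
        (𝓝[>] (0 : ℝ)) (𝓝 (Dch D N M)) := by
  set Me : ℝ → Matrix n n ℂ → Matrix m m ℂ :=
    fun ε ρ => M ρ + ε • (ρ.trace • (1 : Matrix m m ℂ)) with hMe
  have hub : ∀ ε : ℝ, 0 < ε → Dch D N (Me ε) ≤ Dch D N M := by
    intro ε hε
    refine iSup_le fun d => iSup_le fun ρ => iSup_le fun hρ => ?_
    have hρ' : IsState ρ := hρ
    have h1 : matExt (Me ε) d ρ = matExt M d ρ + ε • kId m (ptrR ρ) := matExt_eps M ε d ρ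
    have hle : D (Fin d × m) (matExt N d ρ) (matExt (Me ε) d ρ)
        ≤ D (Fin d × m) (matExt N d ρ) (matExt M d ρ) := by
      rw [h1]
      exact hmono _ _ _ _ (matExt_isState hN d hρ') (matExt_posSemidef hM d hρ'.1)
        (smul_posSemidef hε.le (kId_posSemidef (ptrR_posSemidef hρ'.1)))
    exact hle.trans (le_iSup_of_le d (le_iSup₂_of_le ρ hρ le_rfl))
  have hlb : ∀ a : EReal, a < Dch D N M →
      ∀ᶠ ε in 𝓝[>] (0 : ℝ), a < Dch D N (Me ε) := by
    intro a ha
    rw [Dch, lt_iSup_iff] at ha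
    obtain ⟨d, ha⟩ := ha
    rw [lt_iSup_iff] at ha
    obtain ⟨ρ, ha⟩ := ha
    rw [lt_iSup_iff] at ha
    obtain ⟨hρ, ha⟩ := ha
    have hρ' : IsState ρ := hρ
    have hten := hreg (Fin d × m) (matExt N d ρ) (matExt M d ρ)
      (matExt_isState hN d hρ') (matExt_posSemidef hM d hρ'.1)
    have hev1 : ∀ᶠ ε in 𝓝[>] (0 : ℝ),
        a < D (Fin d × m) (matExt N d ρ)
          (matExt M d ρ + ε • (1 : Matrix (Fin d × m) (Fin d × m) ℂ)) :=
      hten.eventually (lt_mem_nhds ha)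
    filter_upwards [hev1, self_mem_nhdsWithin] with ε he1 he2
    have hε : (0 : ℝ) < ε := he2
    have hsplit : matExt M d ρ + ε • (1 : Matrix (Fin d × m) (Fin d × m) ℂ)
        = matExt (Me ε) d ρ + ε • kId m ((1 : Matrix (Fin d) (Fin d) ℂ) - ptrR ρ) := by
      rw [matExt_eps, ← kId_one_sub, add_assoc, ← smul_add]
      congr 2
      rw [add_comm, sub_add_cancel]
    have hPSD2 : (ε • kId m ((1 : Matrix (Fin d) (Fin d) ℂ) - ptrR ρ)).PosSemidef := by
      refine smul_posSemidef hε.le (kId_posSemidef (one_sub_posSemidef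
        (ptrR_posSemidef hρ'.1) ?_))
      rw [ptrR_trace, hρ'.2]
    have hPSD1 : (matExt (Me ε) d ρ).PosSemidef := by
      rw [matExt_eps]
      exact (matExt_posSemidef hM d hρ'.1).add
        (smul_posSemidef hε.le (kId_posSemidef (ptrR_posSemidef hρ'.1)))
    have hkey : D (Fin d × m) (matExt N d ρ)
          (matExt M d ρ + ε • (1 : Matrix (Fin d × m) (Fin d × m) ℂ))
        ≤ Dch D N (Me ε) := by
      rw [hsplit]
      refine (hmono _ _ _ _ (matExt_isState hN d hρ') hPSD1 hPSD2).trans ?_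
      exact le_iSup_of_le d (le_iSup₂_of_le ρ hρ le_rfl)
    exact lt_of_lt_of_le he1 hkey
  constructor
  · apply le_antisymm
    · refine le_of_forall_lt fun a ha => ?_
      have hIoo : Set.Ioo (0 : ℝ) 1 ∈ 𝓝[>] (0 : ℝ) :=
        Ioo_mem_nhdsGT_of_mem (by constructor <;> norm_num)
      obtain ⟨ε, he1, he2⟩ :=
        ((hlb a ha).and (eventually_of_mem hIoo fun x hx => hx)).exists
      exact lt_of_lt_of_le he1 (le_iSup₂_of_le ε he2 le_rfl)
    · exact iSup₂_le fun ε hε => hub ε hε.1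
  · rw [tendsto_order]
    constructor
    · exact fun a ha => hlb a ha
    · intro b hb
      filter_upwards [self_mem_nhdsWithin] with ε hε
      exact lt_of_le_of_lt (hub ε hε) hb

end QHE
end
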